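/- arXiv:2207.08011 — 10 statements merged into one kernel-verified Lean document; each statement's English description precedes it below -/
import Mathlib

section
/- Let f be a real polynomial of degree d and write its generating series ∑_{k≥0} f(k) t^k = h*(t)/(1-t)^{d+1}, where h*(t) is a polynomial of degree at most d (the h*-polynomial of f). If g(z) = (z^2 + z + c)·f(z) for a real constant c, and the h*-polynomial of f is palindromic of degree at most d (i.e., h*_i = h*_{d-i} for all 0 ≤ i ≤ d), then the h*-polynomial of g, taken with respect to degree d+2, is palindromic (i.e., its coefficients satisfy h*_i = h*_{(d+2)-i}). -/
/-!
For `p` of degree at most `n`, the `i`-th coefficient of `(∑ p(k) tᵏ)(1 - t)^(n+1)` is the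
truncated difference `∑_{j ≤ i} (-1)^j C(n+1, j) p(i - j)`. The full `(n+1)`-st difference of `p`
vanishes, so this truncated sum is minus its tail, whose terms are values of `p` at negative
arguments; hence the h*-polynomial is palindromic exactly when `p(-1 - x) = (-1)^n p(x)`. The
factor `z² + z + c` is invariant under `z ↦ -1 - z`, so `g` inherits this symmetry with `n = d + 2`.
-/

open Polynomial Finset

namespace PowerSeries

variable {R : Type*} [CommRing R]

theorem coeff_one_sub_X_pow (m k : ℕ) :
    coeff k ((1 - X : R⟦X⟧) ^ m) = (-1) ^ k * m.choose k := by
  have h : (1 - X : R⟦X⟧) ^ m =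
      rescale (-1) (((1 + Polynomial.X : R[X]) ^ m : R[X]) : R⟦X⟧) := by
    simp [sub_eq_add_neg]
  rw [h, coeff_rescale, Polynomial.coeff_coe, coeff_one_add_X_pow]

theorem isUnit_one_sub_X_pow (m : ℕ) : IsUnit ((1 - X : R⟦X⟧) ^ m) := by
  rw [← invOneSubPow_inv_eq_one_sub_pow]
  exact (invOneSubPow R m)⁻¹.isUnit

end PowerSeries

namespace Polynomial

variable {R : Type*} [CommRing R]

/-- For `p.natDegree ≤ n` this is the h*-polynomial of `p` with respect to `n`, as a power series. -/
noncomputable def hStarSeries (n : ℕ) (p : R[X]) : PowerSeries R :=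
  PowerSeries.mk (fun k : ℕ => p.eval (k : R)) * (1 - PowerSeries.X) ^ (n + 1)

theorem sum_range_choose_mul_eval_sub_eq_zero {p : R[X]} {n : ℕ} (hp : p.natDegree ≤ n)
    (x : R) : ∑ j ∈ range (n + 2), (-1) ^ j * (n + 1).choose j * p.eval (x - j) = 0 := by
  have h := congr_fun (fwdDiff_iter_eq_zero_of_degree_lt (Nat.lt_succ_of_le hp)) (x - (n + 1))
  rw [fwdDiff_iter_eq_sum_shift, ← sum_range_reflect, Pi.zero_apply] at h
  rw [← h]
  refine sum_congr rfl fun j hj => ?_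
  have hj : j ≤ n + 1 := Nat.lt_succ_iff.mp (mem_range.mp hj)
  rw [Nat.add_sub_cancel, Nat.choose_symm hj, Nat.sub_sub_self hj, zsmul_eq_mul, nsmul_one,
    Nat.cast_sub hj]
  push_cast
  ring_nf

theorem coeff_hStarSeries (n : ℕ) (p : R[X]) (i : ℕ) :
    PowerSeries.coeff i (hStarSeries n p) =
      ∑ j ∈ range (i + 1), (-1) ^ j * (n + 1).choose j * p.eval ((i : R) - j) := by
  rw [hStarSeries, mul_comm, PowerSeries.coeff_mul, Nat.sum_antidiagonal_eq_sum_range_succ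
    (fun j k => PowerSeries.coeff j _ * PowerSeries.coeff k _)]
  refine sum_congr rfl fun j hj => ?_
  rw [PowerSeries.coeff_mk, PowerSeries.coeff_one_sub_X_pow,
    Nat.cast_sub (Nat.lt_succ_iff.mp (mem_range.mp hj))]

theorem coeff_hStarSeries_eq_zero {p : R[X]} {n i : ℕ} (hp : p.natDegree ≤ n) (hi : n < i) :
    PowerSeries.coeff i (hStarSeries n p) = 0 := by
  rw [coeff_hStarSeries, ← sum_range_choose_mul_eval_sub_eq_zero hp (i : R)]
  refine (sum_subset (range_subset_range.mpr (by omega)) fun j _ hj => ?_).symm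
  rw [Nat.choose_eq_zero_of_lt (by simp only [mem_range] at hj; omega), Nat.cast_zero,
    mul_zero, zero_mul]

theorem coeff_hStarSeries_reflect {p q : R[X]} {n i : ℕ} (hq : q.natDegree ≤ n)
    (hqp : ∀ x, q.eval (-1 - x) = (-1) ^ n * p.eval x) (hi : i ≤ n) :
    PowerSeries.coeff i (hStarSeries n q) = PowerSeries.coeff (n - i) (hStarSeries n p) := by
  have hsplit := sum_range_add_sum_Ico
    (fun j => (-1) ^ j * ((n + 1).choose j : R) * q.eval ((i : R) - j)) (by omega : i + 1 ≤ n + 2)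
  rw [sum_range_choose_mul_eval_sub_eq_zero hq, sum_Ico_eq_sum_range,
    show n + 2 - (i + 1) = n - i + 1 by omega] at hsplit
  rw [coeff_hStarSeries, coeff_hStarSeries, eq_neg_of_add_eq_zero_left hsplit,
    ← sum_neg_distrib]
  conv_rhs => rw [← sum_range_reflect]
  refine sum_congr rfl fun k hk => ?_
  obtain ⟨m, rfl⟩ := Nat.exists_eq_add_of_le (by simp only [mem_range] at hk; omega : i + k ≤ n)
  have hsign : ((-1 : R) ^ (i + k)) ^ 2 = 1 := by
    rw [← pow_mul, mul_comm, pow_mul, neg_one_sq, one_pow]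
  rw [show i + k + m - i + 1 - 1 - k = m by omega, show i + k + m - i = k + m by omega,
    Nat.choose_symm_of_eq_add (show i + k + m + 1 = m + (i + 1 + k) by omega)]
  push_cast
  rw [show (i : R) - (i + 1 + k) = -1 - k by ring, show (k + m : R) - m = k by ring, hqp]
  linear_combination
    (-1 : R) ^ m * ((i + k + m + 1).choose (i + 1 + k) : R) * p.eval (k : R) * hsign

variable [IsDomain R] [CharZero R]

theorem hStarSeries_injective (n : ℕ) :
    Function.Injective (hStarSeries n : R[X] → PowerSeries R) := by
  intro p q hpq
  have hmk := (PowerSeries.isUnit_one_sub_X_pow (n + 1)).mul_right_cancel hpq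
  refine eq_of_infinite_eval_eq p q
    (Set.infinite_of_injective_forall_mem Nat.cast_injective fun k => ?_)
  simpa using congrArg (PowerSeries.coeff k) hmk

theorem coeff_hStarSeries_palindromic_iff {p : R[X]} {n : ℕ} (hp : p.natDegree ≤ n) :
    (∀ i ≤ n, PowerSeries.coeff i (hStarSeries n p) =
      PowerSeries.coeff (n - i) (hStarSeries n p)) ↔
      ∀ x, p.eval (-1 - x) = (-1) ^ n * p.eval x := by
  refine ⟨fun hpal => ?_, fun hrec i hi => coeff_hStarSeries_reflect hp hrec hi⟩
  set r : R[X] := C ((-1) ^ n) * p.comp (-1 - X)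
  have hr : ∀ x, r.eval (-1 - x) = (-1) ^ n * p.eval x := fun x => by simp [r]
  have hrdeg : r.natDegree ≤ n := by
    refine natDegree_C_mul_le _ _ |>.trans <| natDegree_comp_le.trans ?_
    have : (-1 - X : R[X]).natDegree ≤ 1 := by compute_degree
    exact (Nat.mul_le_mul hp this).trans_eq (mul_one n)
  have hrp : r = p := hStarSeries_injective n <| PowerSeries.ext fun i => by
    rcases le_or_gt i n with hi | hi
    · rw [coeff_hStarSeries_reflect hrdeg hr hi, hpal (n - i) (Nat.sub_le n i),
        Nat.sub_sub_self hi]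
    · rw [coeff_hStarSeries_eq_zero hrdeg hi, coeff_hStarSeries_eq_zero hp hi]
  intro x
  rw [← hr x, hrp]

end Polynomial

theorem stmt2_general (d : ℕ) (f : Polynomial ℝ) (hdeg : f.natDegree = d) (c : ℝ)
    (h : Polynomial ℝ)
    (hser : PowerSeries.mk (fun k : ℕ => f.eval (k : ℝ)) * (1 - PowerSeries.X) ^ (d + 1)
      = (h : PowerSeries ℝ))
    (hpal : ∀ i ≤ d, h.coeff i = h.coeff (d - i))
    (g : Polynomial ℝ) (hg : g = (X ^ 2 + X + C c) * f)
    (H : Polynomial ℝ)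
    (hHser : PowerSeries.mk (fun k : ℕ => g.eval (k : ℝ)) * (1 - PowerSeries.X) ^ (d + 3)
      = (H : PowerSeries ℝ)) :
    ∀ i ≤ d + 2, H.coeff i = H.coeff (d + 2 - i) := by
  have hfrec : ∀ x, f.eval (-1 - x) = (-1) ^ d * f.eval x := by
    refine (coeff_hStarSeries_palindromic_iff hdeg.le).mp fun i hi => ?_
    rw [show hStarSeries d f = h from hser, coeff_coe, coeff_coe, hpal i hi]
  have hgdeg : g.natDegree ≤ d + 2 := by
    have : (X ^ 2 + X + C c : ℝ[X]).natDegree ≤ 2 := by compute_degree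
    rw [hg]
    exact natDegree_mul_le.trans (by omega)
  have hgrec : ∀ x, g.eval (-1 - x) = (-1) ^ (d + 2) * g.eval x := fun x => by
    simp only [hg, eval_mul, eval_add, eval_pow, eval_X, eval_C, hfrec x]
    ring
  intro i hi
  have := (coeff_hStarSeries_palindromic_iff hgdeg).mpr hgrec i hi
  rwa [show hStarSeries (d + 2) g = H from hHser, coeff_coe, coeff_coe] at this

/-- If `f` is a real polynomial of degree `d` whose h*-polynomial (the numerator
`h` in `∑ f(k) tᵏ = h(t)/(1-t)^{d+1}`) is palindromic with respect to `d`, then the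
h*-polynomial of `g = (z²+z+c)·f`, taken with respect to degree `d+2`, is palindromic. -/
theorem stmt2 (d : ℕ) (f : Polynomial ℝ) (hdeg : f.natDegree = d) (c : ℝ)
    (h : Polynomial ℝ) (hhdeg : h.natDegree ≤ d)
    (hser : PowerSeries.mk (fun k : ℕ => f.eval (k : ℝ)) * (1 - PowerSeries.X) ^ (d + 1)
      = (h : PowerSeries ℝ))
    (hpal : ∀ i ≤ d, h.coeff i = h.coeff (d - i))
    (g : Polynomial ℝ) (hg : g = (X ^ 2 + X + C c) * f)
    (H : Polynomial ℝ) (hHdeg : H.natDegree ≤ d + 2)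
    (hHser : PowerSeries.mk (fun k : ℕ => g.eval (k : ℝ)) * (1 - PowerSeries.X) ^ (d + 3)
      = (H : PowerSeries ℝ)) :
    ∀ i ≤ d + 2, H.coeff i = H.coeff (d + 2 - i) :=
  stmt2_general d f hdeg c h hser hpal g hg H hHser
end

section
/- Define p_0^d(z) = d!·(binom(z+d, d) + binom(z, d)) = ∏_{j=1}^{d}(z+j) + ∏_{j=0}^{d-1}(z-j). Then for every z_0 on the critical line CL = {z : Re(z) = -1/2}, the value p_0^d(z_0) lies in ℝ·(√-1)^d, i.e., p_0^d(z_0)/( i^d ) is real. -/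
open Complex Finset

lemma prod_neg_aux (f : ℕ → ℂ) (d : ℕ) :
    ∏ x ∈ Finset.range d, -(f x) = (-1 : ℂ) ^ d * ∏ x ∈ Finset.range d, f x := by
  induction d with
  | zero => simp
  | succ n ih => rw [Finset.prod_range_succ, Finset.prod_range_succ, ih]; ring

/-- For `p₀ᵈ(z) = ∏_{j=1}^{d}(z+j) + ∏_{j=0}^{d-1}(z-j)`, every `z₀` with
`Re(z₀) = -1/2` satisfies `p₀ᵈ(z₀) ∈ ℝ·(√-1)ᵈ`. -/
theorem stmt4 (d : ℕ) (hd : 0 < d) (z₀ : ℂ) (hz₀ : z₀.re = -(1/2)) :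
    ∃ r : ℝ, (∏ j ∈ Finset.range d, (z₀ + (j + 1 : ℕ))) +
        (∏ j ∈ Finset.range d, (z₀ - (j : ℕ))) = (r : ℂ) * Complex.I ^ d := by
  set A := ∏ j ∈ Finset.range d, (z₀ + (j + 1 : ℕ)) with hA
  set B := ∏ j ∈ Finset.range d, (z₀ - (j : ℕ)) with hB
  have hc : (starRingEnd ℂ) z₀ = -1 - z₀ := by
    apply Complex.ext <;> simp [hz₀] <;> norm_num
  have hcA : (starRingEnd ℂ) A = (-1 : ℂ) ^ d * B := by
    rw [hA, map_prod]
    have : ∀ j ∈ Finset.range d, (starRingEnd ℂ) (z₀ + ((j : ℕ) + 1 : ℕ)) = -(z₀ - (j : ℕ)) := by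
      intro j _; simp [hc]; ring
    rw [Finset.prod_congr rfl this, prod_neg_aux, hB]
  have hcB : (starRingEnd ℂ) B = (-1 : ℂ) ^ d * A := by
    rw [hB, map_prod]
    have : ∀ j ∈ Finset.range d, (starRingEnd ℂ) (z₀ - (j : ℕ)) = -(z₀ + ((j : ℕ) + 1 : ℕ)) := by
      intro j _; simp [hc]; ring
    rw [Finset.prod_congr rfl this, prod_neg_aux, hA]
  have hP : (starRingEnd ℂ) (A + B) = (-1 : ℂ) ^ d * (A + B) := by
    rw [map_add, hcA, hcB]; ring
  have hI : (Complex.I : ℂ) ^ d ≠ 0 := pow_ne_zero _ Complex.I_ne_zero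
  have hw : (starRingEnd ℂ) ((A + B) / Complex.I ^ d) = (A + B) / Complex.I ^ d := by
    rw [map_div₀, hP, map_pow, Complex.conj_I]
    rw [neg_pow]
    field_simp
    ring
  obtain ⟨r, hr⟩ := Complex.conj_eq_iff_real.mp hw
  rw [div_eq_iff hI] at hr
  exact ⟨r, hr⟩
end

section
/- Let f, g, f_1, g_1 be real polynomials with positive leading coefficients and all real roots, such that f and g share no common root, f_1 interlaces f, and g_1 interlaces g (where 'h interlaces H' means deg h = deg H - 1 and the real roots of h alternate with the roots of H, the roots of H being outermost). Then f·g_1 + f_1·g has all real roots, is interlaced by f_1·g_1, and itself interlaces f·g. -/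
open Polynomial

/-- A real polynomial has all real roots (counted with multiplicity). -/
def AllRealRoots (p : Polynomial ℝ) : Prop :=
  p ≠ 0 ∧ (p.roots.card : ℕ) = p.natDegree

/-- `Interlaces h H`: `deg h = deg H - 1`, both have all real roots, and when the roots are
listed in increasing order `a₁ ≤ … ≤ a_n` (of `h`) and `b₁ ≤ … ≤ b_{n+1}` (of `H`) they
satisfy `b₁ ≤ a₁ ≤ b₂ ≤ … ≤ a_n ≤ b_{n+1}`. -/
def Interlaces (h H : Polynomial ℝ) : Prop :=
  AllRealRoots h ∧ AllRealRoots H ∧ h.natDegree + 1 = H.natDegree ∧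
  ∃ A B : List ℝ, A.Pairwise (· ≤ ·) ∧ B.Pairwise (· ≤ ·) ∧
    h.roots = (A : Multiset ℝ) ∧ H.roots = (B : Multiset ℝ) ∧
    ∀ i < A.length, B.getD i 0 ≤ A.getD i 0 ∧ A.getD i 0 ≤ B.getD (i + 1) 0

namespace Stmt9Aux

noncomputable section
open Classical in
/-- number of elements of `S` that are `≤ x` -/
def cle (S : Multiset ℝ) (x : ℝ) : ℕ := (S.filter (· ≤ x)).card
open Classical in
def clt (S : Multiset ℝ) (x : ℝ) : ℕ := (S.filter (· < x)).card
open Classical in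
def cgt (S : Multiset ℝ) (x : ℝ) : ℕ := (S.filter (x < ·)).card

lemma cle_add (S T : Multiset ℝ) (x : ℝ) : cle (S + T) x = cle S x + cle T x := by
  simp [cle, Multiset.filter_add]

lemma clt_add (S T : Multiset ℝ) (x : ℝ) : clt (S + T) x = clt S x + clt T x := by
  simp [clt, Multiset.filter_add]

lemma cgt_add (S T : Multiset ℝ) (x : ℝ) : cgt (S + T) x = cgt S x + cgt T x := by
  simp [cgt, Multiset.filter_add]

lemma cle_eq_clt_add_count (S : Multiset ℝ) (x : ℝ) :
    cle S x = clt S x + S.count x := by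
  classical
  induction S using Multiset.induction_on with
  | empty => simp [cle, clt]
  | cons a S ih =>
    simp only [cle, clt, Multiset.filter_cons, Multiset.count_cons, Multiset.card_add] at *
    rcases lt_trichotomy a x with h | h | h
    · rw [if_pos h.le, if_pos h, if_neg (by exact fun e => absurd e.symm h.ne)]
      simp; omega
    · subst h
      rw [if_pos le_rfl, if_neg (lt_irrefl _), if_pos rfl]
      simp; omega
    · rw [if_neg (by exact not_le.mpr h), if_neg (by exact fun hh => absurd hh (not_lt.mpr h.le)),
        if_neg (by exact fun e => absurd e.symm h.ne')]
      simp; omega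

lemma cle_add_cgt (S : Multiset ℝ) (x : ℝ) : cle S x + cgt S x = S.card := by
  classical
  induction S using Multiset.induction_on with
  | empty => simp [cle, cgt]
  | cons a S ih =>
    simp only [cle, cgt, Multiset.filter_cons, Multiset.card_cons] at *
    rcases le_or_gt a x with h | h
    · rw [if_pos h, if_neg (not_lt.mpr h)]; simp; omega
    · rw [if_neg (not_le.mpr h), if_pos h]; simp; omega

lemma cle_le_card (S : Multiset ℝ) (x : ℝ) : cle S x ≤ S.card := by
  classical exact Multiset.card_le_card (Multiset.filter_le _ _)

lemma clt_le_cle (S : Multiset ℝ) (x : ℝ) : clt S x ≤ cle S x := by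
  rw [cle_eq_clt_add_count]; omega

lemma count_le_one_of_cle (S : Multiset ℝ) (x : ℝ) : S.count x = cle S x - clt S x := by
  rw [cle_eq_clt_add_count]; omega

lemma cle_of_not_mem {S : Multiset ℝ} {x : ℝ} (h : x ∉ S) : cle S x = clt S x := by
  rw [cle_eq_clt_add_count, Multiset.count_eq_zero_of_notMem h]; omega


lemma cle_le_clt {S : Multiset ℝ} {x y : ℝ} (h : x < y) : cle S x ≤ clt S y := by
  classical
  exact Multiset.card_le_card (Multiset.monotone_filter_right S
    (fun a (ha : a ≤ x) => lt_of_le_of_lt ha h))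

lemma cle_mono {S : Multiset ℝ} {x y : ℝ} (h : x ≤ y) : cle S x ≤ cle S y := by
  classical
  exact Multiset.card_le_card (Multiset.monotone_filter_right S
    (fun a (ha : a ≤ x) => le_trans ha h))

lemma clt_mono {S : Multiset ℝ} {x y : ℝ} (h : x ≤ y) : clt S x ≤ clt S y := by
  classical
  exact Multiset.card_le_card (Multiset.monotone_filter_right S
    (fun a (ha : a < x) => lt_of_lt_of_le ha h))

lemma one_le_cle_of_mem {S : Multiset ℝ} {x : ℝ} (h : x ∈ S) : 1 ≤ cle S x := by
  classical
  have : x ∈ S.filter (· ≤ x) := Multiset.mem_filter.mpr ⟨h, le_rfl⟩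
  exact Multiset.card_pos_iff_exists_mem.mpr ⟨x, this⟩

lemma one_le_count_of_mem {S : Multiset ℝ} {x : ℝ} (h : x ∈ S) : 1 ≤ S.count x :=
  Multiset.one_le_count_iff_mem.mpr h

/-- transfer a pointwise `cle` inequality family to `clt`. -/
lemma clt_le_of_cle_le {S T : Multiset ℝ} {c : ℕ}
    (h : ∀ y, cle S y ≤ cle T y + c) (x : ℝ) : clt S x ≤ clt T x + c := by
  classical
  by_cases hE : ((S + T).filter (· < x)) = 0
  · have hS : clt S x = 0 := by
      have := Multiset.filter_add (· < x) S T
      simp only [clt]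
      have : S.filter (· < x) ≤ (S + T).filter (· < x) :=
        Multiset.filter_le_filter _ (Multiset.le_add_right S T)
      rw [hE] at this
      simpa [clt] using Multiset.card_le_card this
    omega
  · obtain ⟨y, hy⟩ := Multiset.exists_mem_of_ne_zero hE
    -- take the max of elements < x
    have hfin : ((S + T).filter (· < x)).toFinset.Nonempty :=
      ⟨y, Multiset.mem_toFinset.mpr hy⟩
    set M := ((S + T).filter (· < x)).toFinset.max' hfin with hM
    have hMlt : M < x := by
      have := ((S + T).filter (· < x)).toFinset.max'_mem hfin
      have := Multiset.mem_filter.mp (Multiset.mem_toFinset.mp this)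
      exact this.2
    have key : ∀ U : Multiset ℝ, U ≤ S + T → clt U x = cle U M := by
      intro U hU
      classical
      simp only [clt, cle]
      congr 1
      apply Multiset.filter_congr
      intro a ha
      constructor
      · intro halt
        apply Finset.le_max'
        exact Multiset.mem_toFinset.mpr (Multiset.mem_filter.mpr ⟨Multiset.mem_of_le hU ha, halt⟩)
      · intro hale
        exact lt_of_le_of_lt hale hMlt
    rw [key S (Multiset.le_add_right S T), key T (Multiset.le_add_left T S)]
    exact h M


/-- interlacing of root multisets, counting form -/
def Ilv (S T : Multiset ℝ) : Prop :=
  ∀ x, cle S x ≤ cle T x ∧ cle T x ≤ cle S x + 1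

section SortedLists

open Classical in
lemma sorted_filter_ge {L : List ℝ} (hL : L.Pairwise (· ≤ ·)) {p : ℝ → Prop} [DecidablePred p]
    (hp : ∀ a b : ℝ, a ≤ b → p b → p a) :
    ∀ i : ℕ, i < L.length → p (L.getD i 0) → i + 1 ≤ (L.filter (fun a => decide (p a))).length := by
  induction L with
  | nil => intro i hi; simp at hi
  | cons a L ih =>
    intro i hi hpi
    have ha : p a := by
      cases i with
      | zero => simpa using hpi
      | succ j =>
        have hj : j < L.length := by simpa using hi
        have : L.getD j 0 ∈ L := by
          rw [List.getD_eq_getElem _ _ hj]; exact List.getElem_mem hj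
        exact hp a _ (List.rel_of_pairwise_cons hL this) (by simpa using hpi)
    rw [List.filter_cons, if_pos (by simpa using ha)]
    cases i with
    | zero => simp
    | succ j =>
      have hj : j < L.length := by simpa using hi
      have := ih hL.of_cons j hj (by simpa using hpi)
      simpa using this

open Classical in
lemma sorted_filter_le {L : List ℝ} (hL : L.Pairwise (· ≤ ·)) {p : ℝ → Prop} [DecidablePred p]
    (hp : ∀ a b : ℝ, a ≤ b → p b → p a) :
    ∀ i : ℕ, i < L.length → ¬ p (L.getD i 0) → (L.filter (fun a => decide (p a))).length ≤ i := by
  induction L with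
  | nil => intro i hi; simp at hi
  | cons a L ih =>
    intro i hi hpi
    cases i with
    | zero =>
      simp only [List.getD_cons_zero] at hpi
      have h0 : (a :: L).filter (fun a => decide (p a)) = [] := by
        rw [List.filter_eq_nil_iff]
        intro b hb
        rcases List.mem_cons.mp hb with rfl | hb
        · simpa using hpi
        · simp only [decide_eq_true_eq]
          intro hpb
          exact hpi (hp a b (List.rel_of_pairwise_cons hL hb) hpb)
      rw [h0]; simp
    | succ j =>
      have hj : j < L.length := by simpa using hi
      have hrec := ih hL.of_cons j hj (by simpa using hpi)
      rw [List.filter_cons]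
      by_cases hpa : p a
      · rw [if_pos (by simpa using hpa)]; simpa using hrec
      · rw [if_neg (by simpa using hpa)]; omega

lemma cle_coe (L : List ℝ) (x : ℝ) :
    cle (↑L) x = (L.filter (fun a => decide (a ≤ x))).length := by
  classical
  simp [cle, Multiset.filter_coe]

lemma clt_coe (L : List ℝ) (x : ℝ) :
    clt (↑L) x = (L.filter (fun a => decide (a < x))).length := by
  classical
  simp [clt, Multiset.filter_coe]

lemma sorted_cle_ge {L : List ℝ} (hL : L.Pairwise (· ≤ ·)) {i : ℕ} (hi : i < L.length) {x : ℝ}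
    (h : L.getD i 0 ≤ x) : i + 1 ≤ cle (↑L) x := by
  rw [cle_coe]
  exact sorted_filter_ge hL (p := (· ≤ x)) (fun a b hab hb => le_trans hab hb) i hi h

lemma sorted_cle_le {L : List ℝ} (hL : L.Pairwise (· ≤ ·)) {i : ℕ} (hi : i < L.length) {x : ℝ}
    (h : ¬ L.getD i 0 ≤ x) : cle (↑L) x ≤ i := by
  rw [cle_coe]
  exact sorted_filter_le hL (p := (· ≤ x)) (fun a b hab hb => le_trans hab hb) i hi h

lemma sorted_clt_ge {L : List ℝ} (hL : L.Pairwise (· ≤ ·)) {i : ℕ} (hi : i < L.length) {x : ℝ}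
    (h : L.getD i 0 < x) : i + 1 ≤ clt (↑L) x := by
  rw [clt_coe]
  exact sorted_filter_ge hL (p := (· < x)) (fun a b hab hb => lt_of_le_of_lt hab hb) i hi h

lemma sorted_clt_le {L : List ℝ} (hL : L.Pairwise (· ≤ ·)) {i : ℕ} (hi : i < L.length) {x : ℝ}
    (h : ¬ L.getD i 0 < x) : clt (↑L) x ≤ i := by
  rw [clt_coe]
  exact sorted_filter_le hL (p := (· < x)) (fun a b hab hb => lt_of_le_of_lt hab hb) i hi h

/-- list (getD) interlacing implies counting interlacing -/
lemma ilv_of_getD {A B : List ℝ} (hA : A.Pairwise (· ≤ ·)) (hB : B.Pairwise (· ≤ ·))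
    (hlen : A.length + 1 = B.length)
    (h : ∀ i < A.length, B.getD i 0 ≤ A.getD i 0 ∧ A.getD i 0 ≤ B.getD (i + 1) 0) :
    Ilv (↑A) (↑B) := by
  intro x
  constructor
  · set k := cle (↑A : Multiset ℝ) x with hk
    rcases Nat.eq_zero_or_pos k with h0 | h0
    · omega
    have hkA : k ≤ A.length := by simpa using cle_le_card (↑A) x
    have hAk : A.getD (k - 1) 0 ≤ x := by
      by_contra hc
      have := sorted_cle_le hA (by omega) hc
      omega
    have hBk : B.getD (k - 1) 0 ≤ x :=
      le_trans (h (k - 1) (by omega)).1 hAk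
    have := sorted_cle_ge hB (by omega) hBk
    omega
  · set k := cle (↑B : Multiset ℝ) x with hk
    rcases le_or_gt k 1 with h0 | h0
    · omega
    have hkB : k ≤ B.length := by simpa using cle_le_card (↑B) x
    have hBk : B.getD (k - 1) 0 ≤ x := by
      by_contra hc
      have := sorted_cle_le hB (by omega) hc
      omega
    have hAk : A.getD (k - 2) 0 ≤ x := by
      refine le_trans ?_ hBk
      have := (h (k - 2) (by omega)).2
      simpa [show k - 2 + 1 = k - 1 by omega] using this
    have := sorted_cle_ge hA (by omega) hAk
    omega

/-- counting interlacing implies list (getD) interlacing -/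
lemma getD_of_ilv {A B : List ℝ} (hA : A.Pairwise (· ≤ ·)) (hB : B.Pairwise (· ≤ ·))
    (hlen : A.length + 1 = B.length) (h : Ilv (↑A) (↑B)) :
    ∀ i < A.length, B.getD i 0 ≤ A.getD i 0 ∧ A.getD i 0 ≤ B.getD (i + 1) 0 := by
  intro i hi
  constructor
  · by_contra hc
    push_neg at hc
    have h1 := sorted_cle_ge hA hi (le_refl (A.getD i 0))
    have h2 := sorted_cle_le hB (by omega) (not_le.mpr hc)
    have := (h (A.getD i 0)).1
    omega
  · by_contra hc
    push_neg at hc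
    have h1 := sorted_cle_ge hB (i := i + 1) (by omega) (le_refl (B.getD (i + 1) 0))
    have h2 := sorted_cle_le hA hi (not_le.mpr hc)
    have := (h (B.getD (i + 1) 0)).2
    omega

end SortedLists


section Poly

/-- the monic real polynomial with root multiset `S` -/
def P (S : Multiset ℝ) : Polynomial ℝ := (S.map (fun r => X - C r)).prod

lemma P_monic (S : Multiset ℝ) : (P S).Monic :=
  monic_multiset_prod_of_monic S _ (fun i _ => monic_X_sub_C i)

lemma P_ne_zero (S : Multiset ℝ) : P S ≠ 0 := (P_monic S).ne_zero

lemma P_natDegree (S : Multiset ℝ) : (P S).natDegree = S.card := by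
  unfold P
  rw [natDegree_multiset_prod_of_monic]
  · simp [Multiset.map_map, Function.comp_def, natDegree_X_sub_C]
  · intro i hi
    obtain ⟨r, _, rfl⟩ := Multiset.mem_map.mp hi
    exact monic_X_sub_C r


lemma P_roots (S : Multiset ℝ) : (P S).roots = S := roots_multiset_prod_X_sub_C S

lemma P_add (S T : Multiset ℝ) : P (S + T) = P S * P T := by
  unfold P
  rw [Multiset.map_add, Multiset.prod_add]

lemma P_eval (S : Multiset ℝ) (x : ℝ) : (P S).eval x = (S.map (fun r => x - r)).prod := by
  unfold P
  rw [eval_multiset_prod, Multiset.map_map]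
  simp [Function.comp_def]

lemma P_eval_ne_zero {S : Multiset ℝ} {x : ℝ} (h : x ∉ S) : (P S).eval x ≠ 0 := by
  rw [P_eval]
  apply Multiset.prod_ne_zero
  intro h0
  obtain ⟨r, hr, he⟩ := Multiset.mem_map.mp h0
  have : r = x := by
    have : x - r = 0 := he
    linarith
  exact h (this ▸ hr)

lemma P_eval_eq_zero {S : Multiset ℝ} {x : ℝ} (h : x ∈ S) : (P S).eval x = 0 := by
  rw [P_eval]
  exact Multiset.prod_eq_zero (Multiset.mem_map.mpr ⟨x, h, by ring⟩)

lemma P_eval_pos_iff {S : Multiset ℝ} {x : ℝ} (h : x ∉ S) :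
    (0 < (P S).eval x ↔ Even (cgt S x)) := by
  classical
  induction S using Multiset.induction_on with
  | empty => simp [P_eval, cgt]
  | cons a S ih =>
    have hxS : x ∉ S := fun hh => h (Multiset.mem_cons_of_mem hh)
    have hxa : x ≠ a := fun hh => h (hh ▸ Multiset.mem_cons_self a S)
    have hps : (P (a ::ₘ S)).eval x = (x - a) * (P S).eval x := by
      rw [P_eval, P_eval, Multiset.map_cons, Multiset.prod_cons]
    have hcg : cgt (a ::ₘ S) x = cgt S x + (if x < a then 1 else 0) := by
      simp only [cgt, Multiset.filter_cons]
      split <;> simp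
    have hne := P_eval_ne_zero hxS
    rcases lt_or_gt_of_ne hxa with hlt | hgt
    · rw [hps, hcg, if_pos hlt]
      rw [Nat.even_add_one, ← ih hxS]
      constructor
      · intro hpos hpos2
        nlinarith
      · intro hneg
        rcases hne.lt_or_gt with hn | hp
        · nlinarith
        · exact absurd hp hneg
    · rw [hps, hcg, if_neg (not_lt.mpr hgt.le), Nat.add_zero]
      rw [← ih hxS]
      constructor
      · intro hpos
        nlinarith
      · intro hpos
        nlinarith

/-- sign of a real-rooted polynomial with positive leading coefficient off its roots -/
lemma sign_of_allRealRoots {q : Polynomial ℝ} (hq : AllRealRoots q) (hlc : 0 < q.leadingCoeff)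
    {x : ℝ} (h : x ∉ q.roots) : q.eval x ≠ 0 ∧ (0 < q.eval x ↔ Even (cgt q.roots x)) := by
  have hfact := Polynomial.C_leadingCoeff_mul_prod_multiset_X_sub_C (p := q) hq.2
  have heval : q.eval x = q.leadingCoeff * (P q.roots).eval x := by
    conv_lhs => rw [← hfact]
    simp [P]
  constructor
  · rw [heval]
    exact mul_ne_zero (ne_of_gt hlc) (P_eval_ne_zero h)
  · rw [heval, ← P_eval_pos_iff h]
    constructor
    · intro hpos
      rcases (P_eval_ne_zero h).lt_or_gt with hn | hp
      · nlinarith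
      · exact hp
    · intro hpos; positivity

end Poly


section PairFacts

/-- facts at a point of the outer multiset of an interlacing pair -/
lemma pair_mem_T {S T : Multiset ℝ} (hIlv : Ilv S T)
    (hdisj : ∀ x, ¬(x ∈ S ∧ x ∈ T)) {z : ℝ} (hz : z ∈ T) :
    cle T z = cle S z + 1 ∧ clt T z = clt S z ∧ T.count z = 1 ∧ cle S z = clt S z := by
  have hzS : z ∉ S := fun hh => hdisj z ⟨hh, hz⟩
  have h1 : cle S z = clt S z := cle_of_not_mem hzS
  have h2 : cle T z = clt T z + T.count z := cle_eq_clt_add_count T z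
  have h3 : 1 ≤ T.count z := one_le_count_of_mem hz
  have h4 := (hIlv z).1
  have h5 := (hIlv z).2
  have h6 : clt S z ≤ clt T z := clt_le_of_cle_le (c := 0) (fun y => by have := (hIlv y).1; omega) z
  have h7 : clt T z ≤ clt S z + 1 := clt_le_of_cle_le (c := 1) (fun y => (hIlv y).2) z
  omega

/-- facts at a point of the inner multiset of an interlacing pair -/
lemma pair_mem_S {S T : Multiset ℝ} (hIlv : Ilv S T)
    (hdisj : ∀ x, ¬(x ∈ S ∧ x ∈ T)) {w : ℝ} (hw : w ∈ S) :
    cle S w = cle T w ∧ clt T w = clt S w + 1 ∧ S.count w = 1 ∧ cle S w = clt S w + 1 := by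
  have hwT : w ∉ T := fun hh => hdisj w ⟨hw, hh⟩
  have h1 : cle T w = clt T w := cle_of_not_mem hwT
  have h2 : cle S w = clt S w + S.count w := cle_eq_clt_add_count S w
  have h3 : 1 ≤ S.count w := one_le_count_of_mem hw
  have h4 := (hIlv w).1
  have h5 := (hIlv w).2
  have h6 : clt S w ≤ clt T w := clt_le_of_cle_le (c := 0) (fun y => by have := (hIlv y).1; omega) w
  have h7 : clt T w ≤ clt S w + 1 := clt_le_of_cle_le (c := 1) (fun y => (hIlv y).2) w
  omega

lemma pair_count_T {S T : Multiset ℝ} (hIlv : Ilv S T) (z : ℝ) :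
    T.count z ≤ S.count z + 1 := by
  have h2 : cle T z = clt T z + T.count z := cle_eq_clt_add_count T z
  have h2' : cle S z = clt S z + S.count z := cle_eq_clt_add_count S z
  have h5 := (hIlv z).2
  have h6 : clt S z ≤ clt T z := clt_le_of_cle_le (c := 0) (fun y => ((hIlv y).1).trans (by omega)) z
  omega

end PairFacts


section Core

variable {A B C D : Multiset ℝ} {k1 k2 : ℝ}

/-- the core polynomial -/
def q (A B C D : Multiset ℝ) (k1 k2 : ℝ) : Polynomial ℝ :=
  Polynomial.C k1 * (P B * P C) + Polynomial.C k2 * (P A * P D)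

lemma q_coeff (hcAB : A.card + 1 = B.card) (hcCD : C.card + 1 = D.card) :
    (q A B C D k1 k2).coeff (A.card + C.card + 1) = k1 + k2 ∧
    (q A B C D k1 k2).natDegree ≤ A.card + C.card + 1 := by
  set ν := A.card + C.card + 1 with hν
  have hBC : P B * P C = P (B + C) := (P_add B C).symm
  have hAD : P A * P D = P (A + D) := (P_add A D).symm
  have hdBC : (P (B + C)).natDegree = ν := by rw [P_natDegree]; simp; omega
  have hdAD : (P (A + D)).natDegree = ν := by rw [P_natDegree]; simp; omega
  constructor
  · rw [q, hBC, hAD, coeff_add, coeff_C_mul, coeff_C_mul]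
    have e1 : (P (B + C)).coeff ν = 1 := by
      rw [← hdBC]; exact (P_monic _).coeff_natDegree
    have e2 : (P (A + D)).coeff ν = 1 := by
      rw [← hdAD]; exact (P_monic _).coeff_natDegree
    rw [e1, e2]; ring
  · apply le_trans (natDegree_add_le _ _)
    simp only [max_le_iff]
    constructor
    · apply le_trans (natDegree_C_mul_le _ _); rw [hBC, hdBC]
    · apply le_trans (natDegree_C_mul_le _ _); rw [hAD, hdAD]

lemma q_natDegree (hk1 : 0 < k1) (hk2 : 0 < k2)
    (hcAB : A.card + 1 = B.card) (hcCD : C.card + 1 = D.card) :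
    (q A B C D k1 k2).natDegree = A.card + C.card + 1 ∧
    (q A B C D k1 k2).leadingCoeff = k1 + k2 ∧ (q A B C D k1 k2) ≠ 0 := by
  obtain ⟨h1, h2⟩ := q_coeff (k1 := k1) (k2 := k2) hcAB hcCD
  have hne : (q A B C D k1 k2).coeff (A.card + C.card + 1) ≠ 0 := by
    rw [h1]; positivity
  have hge := le_natDegree_of_ne_zero hne
  have hdeg : (q A B C D k1 k2).natDegree = A.card + C.card + 1 := le_antisymm h2 hge
  refine ⟨hdeg, ?_, ?_⟩
  · rw [leadingCoeff, hdeg, h1]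
  · intro h0
    rw [h0] at hne
    simp at hne

lemma mul_pos_parity {u v : ℝ} {a b : ℕ} (hu : u ≠ 0) (hv : v ≠ 0)
    (ha : 0 < u ↔ Even a) (hb : 0 < v ↔ Even b) : 0 < u * v ↔ Even (a + b) := by
  rw [Nat.even_add]
  rcases hu.lt_or_gt with h | h <;> rcases hv.lt_or_gt with h' | h'
  · constructor
    · intro _
      constructor <;> intro hh
      · exact absurd (ha.mpr hh) (not_lt.mpr h.le)
      · exact absurd (hb.mpr hh) (not_lt.mpr h'.le)
    · intro _; nlinarith
  · have : ¬ (0 < u * v) := by nlinarith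
    constructor
    · intro hh; exact absurd hh this
    · intro hh
      exact absurd ((hh.mpr (hb.mp h')) |> ha.mpr) (not_lt.mpr h.le)
  · have : ¬ (0 < u * v) := by nlinarith
    constructor
    · intro hh; exact absurd hh this
    · intro hh
      exact absurd ((hh.mp (ha.mp h)) |> hb.mpr) (not_lt.mpr h'.le)
  · constructor
    · intro _
      constructor <;> intro _
      · exact hb.mp h'
      · exact ha.mp h
    · intro _; nlinarith

/-- sign of `q` at points of `B`. -/
lemma q_sign_B (hk1 : 0 < k1) (hk2 : 0 < k2)
    (hAB : Ilv A B) (hcAB : A.card + 1 = B.card)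
    (dAB : ∀ x, ¬(x ∈ A ∧ x ∈ B)) (dCD : ∀ x, ¬(x ∈ C ∧ x ∈ D))
    (dBD : ∀ x, ¬(x ∈ B ∧ x ∈ D)) {z : ℝ} (hz : z ∈ B) :
    (q A B C D k1 k2).eval z ≠ 0 ∧
    (0 < (q A B C D k1 k2).eval z ↔ Even (cgt (B + D) z)) := by
  have hzA : z ∉ A := fun hh => dAB z ⟨hh, hz⟩
  have hzD : z ∉ D := fun hh => dBD z ⟨hz, hh⟩
  have heval : (q A B C D k1 k2).eval z = k2 * ((P A).eval z * (P D).eval z) := by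
    simp [q, P_eval_eq_zero hz]
  have hA0 := P_eval_ne_zero hzA
  have hD0 := P_eval_ne_zero hzD
  have hprod := mul_pos_parity hA0 hD0 (P_eval_pos_iff hzA) (P_eval_pos_iff hzD)
  have hAeqB : cgt A z = cgt B z := by
    obtain ⟨e1, e2, e3, e4⟩ := pair_mem_T hAB dAB hz
    have c1 := cle_add_cgt A z
    have c2 := cle_add_cgt B z
    omega
  constructor
  · rw [heval]
    exact mul_ne_zero (ne_of_gt hk2) (mul_ne_zero hA0 hD0)
  · rw [heval, cgt_add, ← hAeqB]
    constructor
    · intro hpos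
      rw [← hprod]
      rcases (mul_ne_zero hA0 hD0).lt_or_gt with h | h
      · nlinarith
      · exact h
    · intro he
      have := hprod.mpr he
      positivity

lemma exists_root_between {p : Polynomial ℝ} {a b : ℝ} (hab : a < b)
    (h : p.eval a * p.eval b < 0) : ∃ r, a < r ∧ r < b ∧ p.eval r = 0 := by
  have hc : ContinuousOn (fun x => p.eval x) (Set.Icc a b) :=
    (Polynomial.continuous p).continuousOn
  rcases lt_or_gt_of_ne (fun hh : p.eval a = 0 => by rw [hh] at h; simp at h) with ha | ha
  · have hb : 0 < p.eval b := by nlinarith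
    have h0 : (0 : ℝ) ∈ Set.Ioo (p.eval a) (p.eval b) := ⟨ha, hb⟩
    obtain ⟨r, hr, hr0⟩ := intermediate_value_Ioo hab.le hc h0
    exact ⟨r, hr.1, hr.2, hr0⟩
  · have hb : p.eval b < 0 := by nlinarith
    have h0 : (0 : ℝ) ∈ Set.Ioo (p.eval b) (p.eval a) := ⟨hb, ha⟩
    obtain ⟨r, hr, hr0⟩ := intermediate_value_Ioo' hab.le hc h0
    exact ⟨r, hr.1, hr.2, hr0⟩

end Core


section Core2

variable {A B C D : Multiset ℝ} {k1 k2 : ℝ}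

lemma q_comm : q A B C D k1 k2 = q C D A B k2 k1 := by
  unfold q; ring

set_option maxHeartbeats 2000000 in
lemma core1 (hk1 : 0 < k1) (hk2 : 0 < k2)
    (hAB : Ilv A B) (hCD : Ilv C D)
    (hcAB : A.card + 1 = B.card) (hcCD : C.card + 1 = D.card)
    (dAB : ∀ x, ¬(x ∈ A ∧ x ∈ B)) (dCD : ∀ x, ¬(x ∈ C ∧ x ∈ D))
    (dBD : ∀ x, ¬(x ∈ B ∧ x ∈ D)) :
    AllRealRoots (q A B C D k1 k2) ∧
    (q A B C D k1 k2).natDegree = A.card + C.card + 1 ∧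
    (q A B C D k1 k2).leadingCoeff = k1 + k2 ∧
    (∀ x, (q A B C D k1 k2).roots.count x ≤ 1) ∧
    (∀ x, cle (q A B C D k1 k2).roots x ≤ clt (B + D) x ∧
      cle (B + D) x ≤ clt (q A B C D k1 k2).roots x + 1) := by
  classical
  obtain ⟨hdeg, hlc, hQ0⟩ := q_natDegree (A := A) (B := B) (C := C) (D := D) hk1 hk2 hcAB hcCD
  set ν := A.card + C.card + 1 with hν
  set Q := q A B C D k1 k2 with hQdef
  set Z := B + D with hZdef
  have hZcard : Z.card = ν + 1 := by simp [hZdef]; omega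
  have hZ1 : ∀ x, Z.count x ≤ 1 := by
    intro x
    rw [hZdef, Multiset.count_add]
    by_cases hxB : x ∈ B
    · have h1 : D.count x = 0 := Multiset.count_eq_zero_of_notMem (fun hh => dBD x ⟨hxB, hh⟩)
      have h2 : A.count x = 0 := Multiset.count_eq_zero_of_notMem (fun hh => dAB x ⟨hh, hxB⟩)
      have := pair_count_T hAB x
      omega
    · have h1 : B.count x = 0 := Multiset.count_eq_zero_of_notMem hxB
      by_cases hxD : x ∈ D
      · have h2 : C.count x = 0 := Multiset.count_eq_zero_of_notMem (fun hh => dCD x ⟨hh, hxD⟩)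
        have := pair_count_T hCD x
        omega
      · have h2 : D.count x = 0 := Multiset.count_eq_zero_of_notMem hxD
        omega
  set zs := Z.sort (· ≤ ·) with hzsdef
  have hzs_coe : (↑zs : Multiset ℝ) = Z := Multiset.sort_eq _ _
  have hzs_sorted : zs.Pairwise (· ≤ ·) := Multiset.pairwise_sort _ _
  have hzs_len : zs.length = ν + 1 := by
    have := congrArg Multiset.card hzs_coe
    simpa using this.trans hZcard
  have hzs_nodup : zs.Nodup := by
    rw [← Multiset.coe_nodup, hzs_coe]
    exact Multiset.nodup_iff_count_le_one.mpr hZ1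
  have hss : ∀ i j, i < j → j < zs.length → zs.getD i 0 < zs.getD j 0 := by
    intro i j hij hj
    have hi : i < zs.length := lt_trans hij hj
    rw [List.getD_eq_getElem _ _ hi, List.getD_eq_getElem _ _ hj]
    have hp := List.pairwise_iff_get.mp hzs_sorted ⟨i, hi⟩ ⟨j, hj⟩ hij
    have hn := List.pairwise_iff_get.mp hzs_nodup ⟨i, hi⟩ ⟨j, hj⟩ hij
    exact lt_of_le_of_ne hp hn
  have hss_le : ∀ i j, i ≤ j → j < zs.length → zs.getD i 0 ≤ zs.getD j 0 := by
    intro i j hij hj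
    rcases eq_or_lt_of_le hij with rfl | hlt
    · exact le_rfl
    · exact (hss i j hlt hj).le
  have hmemZ : ∀ t, t < zs.length → zs.getD t 0 ∈ Z := by
    intro t ht
    rw [← hzs_coe, List.getD_eq_getElem _ _ ht]
    exact List.getElem_mem ht
  have hcle_t : ∀ t, t < zs.length → cle Z (zs.getD t 0) = t + 1 := by
    intro t ht
    rw [← hzs_coe]
    have h1 := sorted_cle_ge hzs_sorted ht (le_refl (zs.getD t 0))
    by_cases ht1 : t + 1 < zs.length
    · have h2 := sorted_cle_le hzs_sorted ht1 (not_le.mpr (hss t (t + 1) (by omega) ht1))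
      omega
    · have h2 : cle (↑zs) (zs.getD t 0) ≤ zs.length := by
        simpa using cle_le_card (↑zs) (zs.getD t 0)
      omega
  have hsgZ : ∀ z ∈ Z, Q.eval z ≠ 0 ∧ (0 < Q.eval z ↔ Even (cgt Z z)) := by
    intro z hz
    rcases Multiset.mem_add.mp hz with hzB | hzD
    · exact q_sign_B hk1 hk2 hAB hcAB dAB dCD dBD hzB
    · have := q_sign_B (A := C) (B := D) (C := A) (D := B) hk2 hk1 hCD hcCD dCD dAB
        (fun x hh => dBD x ⟨hh.2, hh.1⟩) hzD
      rw [← q_comm] at this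
      rwa [hZdef, add_comm B D]
  have hsign : ∀ t, t < zs.length → Q.eval (zs.getD t 0) ≠ 0 ∧
      (0 < Q.eval (zs.getD t 0) ↔ Even (ν - t)) := by
    intro t ht
    obtain ⟨h1, h2⟩ := hsgZ _ (hmemZ t ht)
    refine ⟨h1, ?_⟩
    rw [h2]
    have := cle_add_cgt Z (zs.getD t 0)
    have := hcle_t t ht
    have : cgt Z (zs.getD t 0) = ν - t := by omega
    rw [this]
  have hIVT : ∀ t, t < ν → ∃ r, zs.getD t 0 < r ∧ r < zs.getD (t + 1) 0 ∧ Q.eval r = 0 := by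
    intro t ht
    have ht1 : t + 1 < zs.length := by omega
    have ht0 : t < zs.length := by omega
    obtain ⟨e1, e2⟩ := hsign t ht0
    obtain ⟨f1, f2⟩ := hsign (t + 1) ht1
    have hlt : zs.getD t 0 < zs.getD (t + 1) 0 := hss t (t + 1) (by omega) ht1
    have hpar : ¬ (Even (ν - t) ↔ Even (ν - (t + 1))) := by
      rw [Nat.even_iff, Nat.even_iff]
      omega
    have hneg : Q.eval (zs.getD t 0) * Q.eval (zs.getD (t + 1) 0) < 0 := by
      rcases e1.lt_or_gt with hu | hu <;> rcases f1.lt_or_gt with hv | hv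
      · have p1 : ¬ Even (ν - t) := fun hh => absurd (e2.mpr hh) (not_lt.mpr hu.le)
        have p2 : ¬ Even (ν - (t + 1)) := fun hh => absurd (f2.mpr hh) (not_lt.mpr hv.le)
        exact absurd (iff_of_false p1 p2) hpar
      · nlinarith
      · nlinarith
      · exact absurd (iff_of_true (e2.mp hu) (f2.mp hv)) hpar
    exact exists_root_between hlt hneg
  choose rf hrf1 hrf2 hrf3 using hIVT
  set rfun : ℕ → ℝ := fun t => if h : t < ν then rf t h else 0 with hrfundef
  have hrfun : ∀ t, (ht : t < ν) → zs.getD t 0 < rfun t ∧ rfun t < zs.getD (t + 1) 0 ∧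
      Q.eval (rfun t) = 0 := by
    intro t ht
    simp only [hrfundef, dif_pos ht]
    exact ⟨hrf1 t ht, hrf2 t ht, hrf3 t ht⟩
  set rs : List ℝ := (List.range ν).map rfun with hrsdef
  have hrs_len : rs.length = ν := by simp [hrsdef]
  have hrs_getD : ∀ t, t < ν → rs.getD t 0 = rfun t := by
    intro t ht
    rw [List.getD_eq_getElem _ _ (by simpa [hrs_len] using ht)]
    simp [hrsdef]
  have hrs_strict : ∀ i j, i < j → j < ν → rfun i < rfun j := by
    intro i j hij hj
    have h1 := (hrfun i (by omega)).2.1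
    have h2 := (hrfun j hj).1
    have h3 : zs.getD (i + 1) 0 ≤ zs.getD j 0 := hss_le (i + 1) j (by omega) (by omega)
    linarith
  have hrs_pairwise : rs.Pairwise (· < ·) := by
    rw [List.pairwise_iff_get]
    intro i j hij
    have hi' : (i : ℕ) < ν := by have := i.2; simpa [hrs_len] using this
    have hj' : (j : ℕ) < ν := by have := j.2; simpa [hrs_len] using this
    rw [← List.getD_eq_get, ← List.getD_eq_get, hrs_getD _ hi', hrs_getD _ hj']
    exact hrs_strict i j hij hj'
  have hrs_sorted : rs.Pairwise (· ≤ ·) := hrs_pairwise.imp le_of_lt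
  have hrs_nodup : rs.Nodup := hrs_pairwise.imp ne_of_lt
  have hroots : Q.roots = (↑rs : Multiset ℝ) := by
    have hle : (↑rs : Multiset ℝ) ≤ Q.roots := by
      rw [Multiset.le_iff_count]
      intro x
      by_cases hx : x ∈ rs
      · have h1 : (↑rs : Multiset ℝ).count x ≤ 1 := by
          rw [Multiset.coe_count]
          exact (List.nodup_iff_count_le_one.mp hrs_nodup) x
        have h2 : x ∈ Q.roots := by
          rw [hrsdef] at hx
          obtain ⟨t, ht, rfl⟩ := List.mem_map.mp hx
          have htν : t < ν := List.mem_range.mp ht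
          exact Polynomial.mem_roots'.mpr ⟨hQ0, (hrfun t htν).2.2⟩
        have := one_le_count_of_mem (S := Q.roots) h2
        omega
      · rw [Multiset.coe_count, List.count_eq_zero_of_not_mem hx]
        omega
    have hcard : Multiset.card Q.roots ≤ Multiset.card (↑rs : Multiset ℝ) := by
      have := Polynomial.card_roots' Q
      rw [hdeg] at this
      simpa [hrs_len] using this
    exact (Multiset.eq_of_le_of_card_le hle hcard).symm
  have hall : AllRealRoots Q := by
    refine ⟨hQ0, ?_⟩
    rw [hroots, hdeg]
    simpa using hrs_len
  have hcount1 : ∀ x, Q.roots.count x ≤ 1 := by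
    intro x
    rw [hroots, Multiset.coe_count]
    exact (List.nodup_iff_count_le_one.mp hrs_nodup) x
  refine ⟨hall, hdeg, hlc, hcount1, ?_⟩
  intro x
  rw [hroots, ← hzs_coe]
  constructor
  · -- cle rs x ≤ clt zs x
    set k := cle (↑rs : Multiset ℝ) x with hk
    rcases Nat.eq_zero_or_pos k with h0 | h0
    · omega
    have hkcard : k ≤ ν := by
      have := cle_le_card (↑rs : Multiset ℝ) x
      simpa [hrs_len] using this
    have hr1 : rs.getD (k - 1) 0 ≤ x := by
      by_contra hc
      have := sorted_cle_le hrs_sorted (by omega : k - 1 < rs.length) hc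
      omega
    have hz1 : zs.getD (k - 1) 0 < rs.getD (k - 1) 0 := by
      rw [hrs_getD _ (by omega)]
      exact (hrfun (k - 1) (by omega)).1
    have := sorted_clt_ge hzs_sorted (by omega : k - 1 < zs.length)
      (lt_of_lt_of_le hz1 hr1)
    omega
  · -- cle zs x ≤ clt rs x + 1
    set k := cle (↑zs : Multiset ℝ) x with hk
    rcases le_or_gt k 1 with h0 | h0
    · omega
    have hkcard : k ≤ ν + 1 := by
      have := cle_le_card (↑zs : Multiset ℝ) x
      simpa [hzs_len] using this
    have hz1 : zs.getD (k - 1) 0 ≤ x := by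
      by_contra hc
      have := sorted_cle_le hzs_sorted (by omega : k - 1 < zs.length) hc
      omega
    have hr1 : rs.getD (k - 2) 0 < zs.getD (k - 1) 0 := by
      rw [hrs_getD _ (by omega)]
      have := (hrfun (k - 2) (by omega)).2.1
      simpa [show k - 2 + 1 = k - 1 by omega] using this
    have := sorted_clt_ge hrs_sorted (by omega : k - 2 < rs.length)
      (lt_of_lt_of_le hr1 hz1)
    omega


end Core2


section Core3

variable {A B C D : Multiset ℝ} {k1 k2 : ℝ}

set_option maxHeartbeats 1000000 in
lemma core2_left (hk1 : 0 < k1) (hk2 : 0 < k2)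
    (hAB : Ilv A B) (hCD : Ilv C D)
    (hcAB : A.card + 1 = B.card) (hcCD : C.card + 1 = D.card)
    (dAB : ∀ x, ¬(x ∈ A ∧ x ∈ B)) (dCD : ∀ x, ¬(x ∈ C ∧ x ∈ D))
    (dBD : ∀ x, ¬(x ∈ B ∧ x ∈ D)) :
    ∀ w ∈ A, cle (q A B C D k1 k2).roots w = cle A w + cle C w ∧
      clt (q A B C D k1 k2).roots w = clt A w + clt C w + 1 := by
  classical
  obtain ⟨hall, hdeg, hlc, hcount1, hG⟩ := core1 hk1 hk2 hAB hCD hcAB hcCD dAB dCD dBD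
  intro w hw
  set Q := q A B C D k1 k2 with hQdef
  set R := Q.roots with hRdef
  have hQ0 : Q ≠ 0 := hall.1
  have hRcard : R.card = A.card + C.card + 1 := by rw [hRdef, hall.2, hdeg]
  have hwB : w ∉ B := fun hh => dAB w ⟨hw, hh⟩
  have hPA : (P A).eval w = 0 := P_eval_eq_zero hw
  obtain ⟨pa1, pa2, pa3, pa4⟩ := pair_mem_S hAB dAB hw
  have hZle : cle (B + D) w = cle B w + cle D w := cle_add B D w
  have hZlt : clt (B + D) w = clt B w + clt D w := clt_add B D w
  have hG1 := (hG w).1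
  have hG2 := (hG w).2
  have hcgB := cle_add_cgt B w
  have hcgC := cle_add_cgt C w
  have hcgR := cle_add_cgt R w
  have hcleR := cle_eq_clt_add_count R w
  by_cases hwC : w ∈ C
  · -- w is a double point, it is a root of Q
    have hwD : w ∉ D := fun hh => dCD w ⟨hwC, hh⟩
    obtain ⟨pc1, pc2, pc3, pc4⟩ := pair_mem_S hCD dCD hwC
    have hev : Q.eval w = 0 := by
      simp [hQdef, q, hPA, P_eval_eq_zero hwC]
    have hwR : w ∈ R := Polynomial.mem_roots'.mpr ⟨hQ0, hev⟩
    have hcnt : R.count w = 1 := le_antisymm (hcount1 w) (one_le_count_of_mem hwR)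
    have hZZ : cle (B + D) w = clt (B + D) w := by
      apply cle_of_not_mem
      intro hh
      rcases Multiset.mem_add.mp hh with h | h
      · exact hwB h
      · exact hwD h
    omega
  · have hPC : (P C).eval w ≠ 0 := P_eval_ne_zero hwC
    have hPB : (P B).eval w ≠ 0 := P_eval_ne_zero hwB
    have hev : Q.eval w = k1 * ((P B).eval w * (P C).eval w) := by
      simp [hQdef, q, hPA]
    have hevne : Q.eval w ≠ 0 :=
      hev ▸ mul_ne_zero (ne_of_gt hk1) (mul_ne_zero hPB hPC)
    have hwR : w ∉ R := fun hh => hevne (Polynomial.mem_roots'.mp hh).2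
    have hlcpos : 0 < Q.leadingCoeff := by rw [hlc]; positivity
    obtain ⟨_, hsR⟩ := sign_of_allRealRoots hall hlcpos hwR
    rw [← hRdef] at hsR
    have hprod := mul_pos_parity hPB hPC (P_eval_pos_iff hwB) (P_eval_pos_iff hwC)
    have hsBC : 0 < Q.eval w ↔ Even (cgt B w + cgt C w) := by
      rw [hev, ← hprod]
      have := mul_ne_zero hPB hPC
      constructor
      · intro hh
        rcases this.lt_or_gt with h | h
        · nlinarith
        · exact h
      · intro hh; positivity
    have hpar : (cgt B w + cgt C w) % 2 = cgt R w % 2 := by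
      have := hsBC.symm.trans hsR
      rw [Nat.even_iff, Nat.even_iff] at this
      omega
    have hRR : cle R w = clt R w := cle_of_not_mem hwR
    by_cases hwD : w ∈ D
    · obtain ⟨pd1, pd2, pd3, pd4⟩ := pair_mem_T hCD dCD hwD
      omega
    · have hZZ : cle (B + D) w = clt (B + D) w := by
        apply cle_of_not_mem
        intro hh
        rcases Multiset.mem_add.mp hh with h | h
        · exact hwB h
        · exact hwD h
      have hCD' : cle C w ≤ cle D w := (hCD w).1
      have hCD'' : cle D w ≤ cle C w + 1 := (hCD w).2
      have hCDlt : clt C w ≤ clt D w :=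
        clt_le_of_cle_le (c := 0) (fun y => by have := (hCD y).1; omega) w
      have hCDlt' : clt D w ≤ clt C w + 1 := clt_le_of_cle_le (c := 1) (fun y => (hCD y).2) w
      have hCne : cle C w = clt C w := cle_of_not_mem hwC
      have hDne : cle D w = clt D w := cle_of_not_mem hwD
      omega

end Core3


section Core4

lemma exists_max_le {W : Multiset ℝ} {x : ℝ} (h : 0 < cle W x) :
    ∃ w ∈ W, w ≤ x ∧ cle W x = cle W w := by
  classical
  have hne : (W.filter (· ≤ x)) ≠ 0 := by
    intro hh
    rw [cle, hh] at h
    simp at h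
  obtain ⟨y, hy⟩ := Multiset.exists_mem_of_ne_zero hne
  have hfin : (W.filter (· ≤ x)).toFinset.Nonempty := ⟨y, Multiset.mem_toFinset.mpr hy⟩
  set w := (W.filter (· ≤ x)).toFinset.max' hfin with hwdef
  have hwmem := Multiset.mem_filter.mp (Multiset.mem_toFinset.mp ((W.filter (· ≤ x)).toFinset.max'_mem hfin))
  refine ⟨w, hwmem.1, hwmem.2, ?_⟩
  simp only [cle]
  congr 1
  apply Multiset.filter_congr
  intro a ha
  constructor
  · intro halt
    apply Finset.le_max'
    exact Multiset.mem_toFinset.mpr (Multiset.mem_filter.mpr ⟨ha, halt⟩)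
  · intro hale
    exact le_trans hale hwmem.2

lemma exists_min_gt {W : Multiset ℝ} {x : ℝ} (h : 0 < cgt W x) :
    ∃ w ∈ W, x < w ∧ clt W w = cle W x := by
  classical
  have hne : (W.filter (x < ·)) ≠ 0 := by
    intro hh
    rw [cgt, hh] at h
    simp at h
  obtain ⟨y, hy⟩ := Multiset.exists_mem_of_ne_zero hne
  have hfin : (W.filter (x < ·)).toFinset.Nonempty := ⟨y, Multiset.mem_toFinset.mpr hy⟩
  set w := (W.filter (x < ·)).toFinset.min' hfin with hwdef
  have hwmem := Multiset.mem_filter.mp (Multiset.mem_toFinset.mp ((W.filter (x < ·)).toFinset.min'_mem hfin))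
  refine ⟨w, hwmem.1, hwmem.2, ?_⟩
  simp only [clt, cle]
  congr 1
  apply Multiset.filter_congr
  intro a ha
  constructor
  · intro halt
    by_contra hc
    push_neg at hc
    have hwa : w ≤ a := by
      apply Finset.min'_le
      exact Multiset.mem_toFinset.mpr (Multiset.mem_filter.mpr ⟨ha, hc⟩)
    exact absurd halt (not_lt.mpr hwa)
  · intro hale
    exact lt_of_le_of_lt hale hwmem.2

variable {A B C D : Multiset ℝ} {k1 k2 : ℝ}

lemma core3 (hk1 : 0 < k1) (hk2 : 0 < k2)
    (hAB : Ilv A B) (hCD : Ilv C D)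
    (hcAB : A.card + 1 = B.card) (hcCD : C.card + 1 = D.card)
    (dAB : ∀ x, ¬(x ∈ A ∧ x ∈ B)) (dCD : ∀ x, ¬(x ∈ C ∧ x ∈ D))
    (dBD : ∀ x, ¬(x ∈ B ∧ x ∈ D)) :
    AllRealRoots (q A B C D k1 k2) ∧
    (q A B C D k1 k2).natDegree = A.card + C.card + 1 ∧
    (q A B C D k1 k2).leadingCoeff = k1 + k2 ∧
    Ilv (A + C) (q A B C D k1 k2).roots ∧
    Ilv (q A B C D k1 k2).roots (B + D) := by
  classical
  obtain ⟨hall, hdeg, hlc, hcount1, hG⟩ := core1 hk1 hk2 hAB hCD hcAB hcCD dAB dCD dBD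
  set Q := q A B C D k1 k2 with hQdef
  have hRcard : Q.roots.card = A.card + C.card + 1 := by rw [hall.2, hdeg]
  have hkey : ∀ w ∈ A + C, cle Q.roots w = cle (A + C) w ∧
      clt Q.roots w = clt (A + C) w + 1 := by
    intro w hw
    rw [cle_add, clt_add]
    rcases Multiset.mem_add.mp hw with hwA | hwC
    · exact core2_left hk1 hk2 hAB hCD hcAB hcCD dAB dCD dBD w hwA
    · have := core2_left (A := C) (B := D) (C := A) (D := B) hk2 hk1 hCD hAB hcCD hcAB dCD dAB
        (fun x hh => dBD x ⟨hh.2, hh.1⟩) w hwC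
      rw [← q_comm] at this
      obtain ⟨e1, e2⟩ := this
      rw [← hQdef] at e1 e2
      omega
  refine ⟨hall, hdeg, hlc, ?_, ?_⟩
  · -- Ilv (A + C) Q.roots
    intro x
    constructor
    · rcases Nat.eq_zero_or_pos (cle (A + C) x) with h0 | h0
      · omega
      obtain ⟨w, hwm, hwle, hweq⟩ := exists_max_le h0
      have := (hkey w hwm).1
      have := cle_mono (S := Q.roots) hwle
      omega
    · rcases Nat.eq_zero_or_pos (cgt (A + C) x) with h0 | h0
      · have h1 := cle_add_cgt (A + C) x
        have h2 := cle_le_card Q.roots x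
        have h3 : (A + C).card + 1 = Q.roots.card := by
          rw [hRcard]; simp
        omega
      obtain ⟨w, hwm, hwgt, hweq⟩ := exists_min_gt h0
      have h1 := (hkey w hwm).2
      have h2 := cle_le_clt (S := Q.roots) hwgt
      omega
  · -- Ilv Q.roots (B + D)
    intro x
    have h1 := (hG x).1
    have h2 := (hG x).2
    have h3 := clt_le_cle (B + D) x
    have h4 := clt_le_cle Q.roots x
    omega

end Core4


section Assemble

lemma ilv_add_common {E S T : Multiset ℝ} (h : Ilv S T) : Ilv (E + S) (E + T) := by
  intro x
  rw [cle_add, cle_add]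
  have := h x
  omega

lemma allRealRoots_mul {p r : Polynomial ℝ} (hp : AllRealRoots p) (hr : AllRealRoots r) :
    AllRealRoots (p * r) := by
  have hne : p * r ≠ 0 := mul_ne_zero hp.1 hr.1
  refine ⟨hne, ?_⟩
  rw [Polynomial.roots_mul hne, Multiset.card_add, Polynomial.natDegree_mul hp.1 hr.1,
    hp.2, hr.2]

lemma interlaces_of_ilv {h H : Polynomial ℝ} (hh : AllRealRoots h) (hH : AllRealRoots H)
    (hdeg : h.natDegree + 1 = H.natDegree) (hilv : Ilv h.roots H.roots) : Interlaces h H := by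
  classical
  refine ⟨hh, hH, hdeg, h.roots.sort (· ≤ ·), H.roots.sort (· ≤ ·),
    Multiset.pairwise_sort _ _, Multiset.pairwise_sort _ _,
    (Multiset.sort_eq _ _).symm, (Multiset.sort_eq _ _).symm, ?_⟩
  have hl1 : (h.roots.sort (· ≤ ·)).length = h.natDegree := by
    have := congrArg Multiset.card (Multiset.sort_eq h.roots (· ≤ ·))
    rw [Multiset.coe_card] at this
    rw [this, hh.2]
  have hl2 : (H.roots.sort (· ≤ ·)).length = H.natDegree := by
    have := congrArg Multiset.card (Multiset.sort_eq H.roots (· ≤ ·))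
    rw [Multiset.coe_card] at this
    rw [this, hH.2]
  apply getD_of_ilv (Multiset.pairwise_sort _ _) (Multiset.pairwise_sort _ _) (by omega)
  rw [Multiset.sort_eq, Multiset.sort_eq]
  exact hilv

lemma ilv_of_interlaces {h H : Polynomial ℝ} (hi : Interlaces h H) : Ilv h.roots H.roots := by
  obtain ⟨hh, hH, hdeg, A, B, sA, sB, eA, eB, hg⟩ := hi
  rw [eA, eB]
  have hl1 : A.length = h.natDegree := by
    have := hh.2
    rw [eA, Multiset.coe_card] at this
    exact this
  have hl2 : B.length = H.natDegree := by
    have := hH.2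
    rw [eB, Multiset.coe_card] at this
    exact this
  exact ilv_of_getD sA sB (by omega) hg

end Assemble


end
end Stmt9Aux

open Stmt9Aux

set_option maxHeartbeats 2000000 in
/-- Fisk's Leibniz rule: if `f, g, f₁, g₁` have positive leading coefficients
and all real roots, `f` and `g` share no root, `f₁` interlaces `f`, and `g₁` interlaces `g`,
then `f·g₁ + f₁·g` has all real roots, is interlaced by `f₁·g₁`, and interlaces `f·g`. -/
theorem stmt9 (f g f₁ g₁ : Polynomial ℝ)
    (hf : 0 < f.leadingCoeff) (hg : 0 < g.leadingCoeff)
    (hf₁ : 0 < f₁.leadingCoeff) (hg₁ : 0 < g₁.leadingCoeff)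
    (hfr : AllRealRoots f) (hgr : AllRealRoots g)
    (hno : ∀ x : ℝ, ¬ (f.eval x = 0 ∧ g.eval x = 0))
    (h₁ : Interlaces f₁ f) (h₂ : Interlaces g₁ g) :
    AllRealRoots (f * g₁ + f₁ * g) ∧
      Interlaces (f₁ * g₁) (f * g₁ + f₁ * g) ∧
      Interlaces (f * g₁ + f₁ * g) (f * g) := by
  classical
  have IlvAB : Ilv f₁.roots f.roots := ilv_of_interlaces h₁
  have IlvCD : Ilv g₁.roots g.roots := ilv_of_interlaces h₂
  obtain ⟨hf1all, hfall, hdeg1, -⟩ := h₁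
  obtain ⟨hg1all, hgall, hdeg2, -⟩ := h₂
  have dBD0 : ∀ x, ¬(x ∈ f.roots ∧ x ∈ g.roots) := by
    intro x hx
    exact hno x ⟨(Polynomial.mem_roots'.mp hx.1).2, (Polynomial.mem_roots'.mp hx.2).2⟩
  obtain ⟨IF, hIF⟩ : ∃ s, s = f₁.roots ∩ f.roots := ⟨_, rfl⟩
  obtain ⟨IG, hIG⟩ : ∃ s, s = g₁.roots ∩ g.roots := ⟨_, rfl⟩
  obtain ⟨A', hA'⟩ : ∃ s, s = f₁.roots - f.roots := ⟨_, rfl⟩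
  obtain ⟨B', hB'⟩ : ∃ s, s = f.roots - f₁.roots := ⟨_, rfl⟩
  obtain ⟨C', hC'⟩ : ∃ s, s = g₁.roots - g.roots := ⟨_, rfl⟩
  obtain ⟨D', hD'⟩ : ∃ s, s = g.roots - g₁.roots := ⟨_, rfl⟩
  have hA0split : f₁.roots = A' + IF := by
    rw [hA', hIF]; exact (Multiset.sub_add_inter _ _).symm
  have hB0split : f.roots = B' + IF := by
    rw [hB', hIF, Multiset.inter_comm]; exact (Multiset.sub_add_inter _ _).symm
  have hC0split : g₁.roots = C' + IG := by
    rw [hC', hIG]; exact (Multiset.sub_add_inter _ _).symm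
  have hD0split : g.roots = D' + IG := by
    rw [hD', hIG, Multiset.inter_comm]; exact (Multiset.sub_add_inter _ _).symm
  -- cardinalities
  have cA0 : f₁.roots.card = A'.card + IF.card := by
    have := congrArg Multiset.card hA0split
    simpa [Multiset.card_add] using this
  have cB0 : f.roots.card = B'.card + IF.card := by
    have := congrArg Multiset.card hB0split
    simpa [Multiset.card_add] using this
  have cC0 : g₁.roots.card = C'.card + IG.card := by
    have := congrArg Multiset.card hC0split
    simpa [Multiset.card_add] using this
  have cD0 : g.roots.card = D'.card + IG.card := by
    have := congrArg Multiset.card hD0split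
    simpa [Multiset.card_add] using this
  have cf1 : f₁.roots.card = f₁.natDegree := hf1all.2
  have cf : f.roots.card = f.natDegree := hfall.2
  have cg1 : g₁.roots.card = g₁.natDegree := hg1all.2
  have cg : g.roots.card = g.natDegree := hgall.2
  have cAB : A'.card + 1 = B'.card := by omega
  have cCD : C'.card + 1 = D'.card := by omega
  -- interlacing of reduced multisets
  have IlvAB' : Ilv A' B' := by
    intro x
    have h1 := IlvAB x
    have e1 : cle f₁.roots x = cle A' x + cle IF x := by rw [hA0split, cle_add]
    have e2 : cle f.roots x = cle B' x + cle IF x := by rw [hB0split, cle_add]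
    omega
  have IlvCD' : Ilv C' D' := by
    intro x
    have h1 := IlvCD x
    have e1 : cle g₁.roots x = cle C' x + cle IG x := by rw [hC0split, cle_add]
    have e2 : cle g.roots x = cle D' x + cle IG x := by rw [hD0split, cle_add]
    omega
  -- disjointness
  have dAB' : ∀ x, ¬(x ∈ A' ∧ x ∈ B') := by
    intro x hx
    have h1 := one_le_count_of_mem hx.1
    have h2 := one_le_count_of_mem hx.2
    rw [hA', Multiset.count_sub] at h1
    rw [hB', Multiset.count_sub] at h2
    omega
  have dCD' : ∀ x, ¬(x ∈ C' ∧ x ∈ D') := by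
    intro x hx
    have h1 := one_le_count_of_mem hx.1
    have h2 := one_le_count_of_mem hx.2
    rw [hC', Multiset.count_sub] at h1
    rw [hD', Multiset.count_sub] at h2
    omega
  have dBD' : ∀ x, ¬(x ∈ B' ∧ x ∈ D') := by
    intro x hx
    refine dBD0 x ⟨?_, ?_⟩
    · exact Multiset.mem_of_le (hB' ▸ tsub_le_self) hx.1
    · exact Multiset.mem_of_le (hD' ▸ tsub_le_self) hx.2
  have hκ1 : 0 < f.leadingCoeff * g₁.leadingCoeff := mul_pos hf hg₁
  have hκ2 : 0 < f₁.leadingCoeff * g.leadingCoeff := mul_pos hf₁ hg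
  obtain ⟨hallQ, hdegQ, hlcQ, hIlvW, hIlvZ⟩ :=
    core3 hκ1 hκ2 IlvAB' IlvCD' cAB cCD dAB' dCD' dBD'
  -- the key factorization
  have ef : Polynomial.C f.leadingCoeff * P f.roots = f :=
    Polynomial.C_leadingCoeff_mul_prod_multiset_X_sub_C hfr.2
  have ef1 : Polynomial.C f₁.leadingCoeff * P f₁.roots = f₁ :=
    Polynomial.C_leadingCoeff_mul_prod_multiset_X_sub_C hf1all.2
  have eg : Polynomial.C g.leadingCoeff * P g.roots = g :=
    Polynomial.C_leadingCoeff_mul_prod_multiset_X_sub_C hgr.2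
  have eg1 : Polynomial.C g₁.leadingCoeff * P g₁.roots = g₁ :=
    Polynomial.C_leadingCoeff_mul_prod_multiset_X_sub_C hg1all.2
  have key : f * g₁ + f₁ * g = P (IF + IG) *
      q A' B' C' D' (f.leadingCoeff * g₁.leadingCoeff) (f₁.leadingCoeff * g.leadingCoeff) := by
    conv_lhs => rw [← ef, ← ef1, ← eg, ← eg1]
    rw [hA0split, hB0split, hC0split, hD0split, q,
      P_add, P_add, P_add, P_add, P_add, Polynomial.C_mul, Polynomial.C_mul]
    ring
  set Q := q A' B' C' D' (f.leadingCoeff * g₁.leadingCoeff) (f₁.leadingCoeff * g.leadingCoeff)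
    with hQdef
  have hQne : Q ≠ 0 := hallQ.1
  have hPne : P (IF + IG) ≠ 0 := P_ne_zero _
  have hpne : f * g₁ + f₁ * g ≠ 0 := by
    rw [key]; exact mul_ne_zero hPne hQne
  have hrootsp : (f * g₁ + f₁ * g).roots = (IF + IG) + Q.roots := by
    rw [key, Polynomial.roots_mul (mul_ne_zero hPne hQne), P_roots]
  have hdegp : (f * g₁ + f₁ * g).natDegree = (IF.card + IG.card) + (A'.card + C'.card + 1) := by
    rw [key, Polynomial.natDegree_mul hPne hQne, P_natDegree, hdegQ, Multiset.card_add]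
  have hcardQ : Q.roots.card = A'.card + C'.card + 1 := by rw [hallQ.2, hdegQ]
  have hallp : AllRealRoots (f * g₁ + f₁ * g) := by
    refine ⟨hpne, ?_⟩
    rw [hrootsp, hdegp, Multiset.card_add, Multiset.card_add, hcardQ]
  refine ⟨hallp, ?_, ?_⟩
  · -- Interlaces (f₁ * g₁) (f * g₁ + f₁ * g)
    have hmul : AllRealRoots (f₁ * g₁) := allRealRoots_mul hf1all hg1all
    apply interlaces_of_ilv hmul hallp
    · rw [Polynomial.natDegree_mul hf1all.1 hg1all.1, hdegp]
      omega
    · have hr : (f₁ * g₁).roots = (IF + IG) + (A' + C') := by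
        rw [Polynomial.roots_mul (mul_ne_zero hf1all.1 hg1all.1), hA0split, hC0split]
        ac_rfl
      rw [hr, hrootsp]
      exact ilv_add_common hIlvW
  · -- Interlaces (f * g₁ + f₁ * g) (f * g)
    have hmul : AllRealRoots (f * g) := allRealRoots_mul hfr hgr
    apply interlaces_of_ilv hallp hmul
    · rw [Polynomial.natDegree_mul hfr.1 hgr.1, hdegp]
      omega
    · have hr : (f * g).roots = (IF + IG) + (B' + D') := by
        rw [Polynomial.roots_mul (mul_ne_zero hfr.1 hgr.1), hB0split, hD0split]
        ac_rfl
      rw [hr, hrootsp]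
      exact ilv_add_common hIlvZ
end

section
/- Suppose f and g are real polynomials with positive leading coefficients, deg f = deg g = n+1, and there exists a degree-n polynomial h with all real roots that interlaces both f and g. Then for all positive reals α, β, the linear combination αf + βg has all real roots and is interlaced by h. -/
open Polynomial

/-- Number of elements of `M` that are `≤ x`. -/
noncomputable def cntLe (M : Multiset ℝ) (x : ℝ) : ℕ := Multiset.card (M.filter (· ≤ x))

lemma cntLe_cons (a : ℝ) (M : Multiset ℝ) (x : ℝ) :
    cntLe (a ::ₘ M) x = (if a ≤ x then 1 else 0) + cntLe M x := by
  unfold cntLe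
  rw [Multiset.filter_cons, Multiset.card_add]
  split <;> simp

lemma cntLe_coe_le_length (l : List ℝ) (x : ℝ) : cntLe (↑l) x ≤ l.length := by
  calc cntLe (↑l) x ≤ Multiset.card (↑l : Multiset ℝ) := Multiset.card_le_card (Multiset.filter_le _ _)
    _ = l.length := Multiset.coe_card l

/-- For a sorted list, `i < cntLe l x` iff the `i`-th element exists and is `≤ x`. -/
lemma lemS {l : List ℝ} (hl : l.Pairwise (· ≤ ·)) (x : ℝ) (i : ℕ) :
    i < cntLe (↑l) x ↔ i < l.length ∧ l.getD i 0 ≤ x := by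
  induction l generalizing i with
  | nil => simp [cntLe]
  | cons a t ih =>
    rw [List.pairwise_cons] at hl
    rw [← Multiset.cons_coe, cntLe_cons]
    by_cases hax : a ≤ x
    · simp only [if_pos hax]
      cases i with
      | zero =>
        simp only [List.getD_cons_zero]
        constructor
        · intro _; exact ⟨Nat.succ_pos _, hax⟩
        · intro _; omega
      | succ j =>
        rw [List.getD_cons_succ]
        constructor
        · intro hj
          have : j < cntLe (↑t) x := by omega
          have := (ih hl.2 j).mp this
          exact ⟨by simpa using Nat.succ_lt_succ this.1, this.2⟩
        · intro ⟨h1, h2⟩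
          have : j < cntLe (↑t) x := (ih hl.2 j).mpr ⟨by simpa using h1, h2⟩
          omega
    · simp only [if_neg hax]
      have ht : cntLe (↑t) x = 0 := by
        by_contra hc
        have : 0 < cntLe (↑t) x := Nat.pos_of_ne_zero hc
        have := (ih hl.2 0).mp this
        rcases this with ⟨hlen, hle⟩
        have : t.getD 0 0 ∈ t := by
          rw [List.getD_eq_getElem _ _ hlen]; exact List.getElem_mem _
        exact hax (le_trans (hl.1 _ this) hle)
      rw [ht]
      simp only [Nat.zero_add, Nat.add_zero, Nat.not_lt_zero, false_iff, not_and, not_le]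
      intro hi
      cases i with
      | zero => simpa using lt_of_not_ge hax
      | succ j =>
        rw [List.getD_cons_succ]
        have hjt : j < t.length := by simpa using hi
        have : t.getD j 0 ∈ t := by
          rw [List.getD_eq_getElem _ _ hjt]; exact List.getElem_mem _
        exact lt_of_lt_of_le (lt_of_not_ge hax) (hl.1 _ this)

lemma getD_mono {l : List ℝ} (hl : l.Pairwise (· ≤ ·)) {i j : ℕ} (hij : i ≤ j)
    (hj : j < l.length) : l.getD i 0 ≤ l.getD j 0 := by
  have hi : i < l.length := lt_of_le_of_lt hij hj
  rw [List.getD_eq_getElem _ _ hi, List.getD_eq_getElem _ _ hj]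
  exact hl.rel_get_of_le (a := ⟨i, hi⟩) (b := ⟨j, hj⟩) hij

/-- interlacing of sorted lists is equivalent to a counting condition. -/
lemma cnt_char {A B : List ℝ} (hA : A.Pairwise (· ≤ ·)) (hB : B.Pairwise (· ≤ ·))
    (hlen : B.length = A.length + 1) :
    (∀ i < A.length, B.getD i 0 ≤ A.getD i 0 ∧ A.getD i 0 ≤ B.getD (i + 1) 0) ↔
      (∀ x : ℝ, cntLe (↑A) x ≤ cntLe (↑B) x ∧ cntLe (↑B) x ≤ cntLe (↑A) x + 1) := by
  constructor
  · intro hI x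
    constructor
    · by_contra hc
      push_neg at hc
      have h1 := (lemS hA x (cntLe (↑B) x)).mp hc
      have h2 : cntLe (↑B) x < cntLe (↑B) x :=
        (lemS hB x _).mpr ⟨by omega, le_trans (hI _ h1.1).1 h1.2⟩
      omega
    · by_contra hc
      push_neg at hc
      have h1 := (lemS hB x (cntLe (↑A) x + 1)).mp hc
      have h2 : cntLe (↑A) x < cntLe (↑A) x :=
        (lemS hA x _).mpr ⟨by omega, le_trans (hI (cntLe (↑A) x) (by omega)).2 h1.2⟩
      omega
  · intro hC i hi
    constructor
    · by_contra hc
      push_neg at hc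
      set x := A.getD i 0 with hx
      have hcA : i < cntLe (↑A) x := (lemS hA x i).mpr ⟨hi, le_refl _⟩
      have hcB : ¬ i < cntLe (↑B) x := by
        intro hcB
        have := ((lemS hB x i).mp hcB).2
        exact absurd (lt_of_lt_of_le hc this) (lt_irrefl _)
      have := (hC x).1
      omega
    · by_contra hc
      push_neg at hc
      set x := B.getD (i + 1) 0 with hx
      have hcB : i + 1 < cntLe (↑B) x := (lemS hB x _).mpr ⟨by omega, le_refl _⟩
      have hcA : ¬ i < cntLe (↑A) x := by
        intro hcA
        have := ((lemS hA x i).mp hcA).2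
        exact absurd (lt_of_le_of_lt this hc) (lt_irrefl _)
      have := (hC x).2
      omega

/-- evaluation via the root product for a fully real-rooted polynomial. -/
lemma eval_eq_prod {f : Polynomial ℝ} (hf : AllRealRoots f) {B : List ℝ}
    (hB : f.roots = (B : Multiset ℝ)) (x : ℝ) :
    eval x f = f.leadingCoeff * (B.map (fun b => x - b)).prod := by
  conv_lhs => rw [← Polynomial.C_leadingCoeff_mul_prod_multiset_X_sub_C hf.2]
  rw [eval_mul, eval_C, Polynomial.eval_multiset_prod, hB]
  congr 1
  rw [Multiset.map_coe, Multiset.map_coe, ← Multiset.prod_coe (B.map (fun b => x - b))]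
  congr 1
  rw [List.map_map]
  congr 1
  apply List.map_congr_left
  intro b _
  simp

/-- sign of a product `∏ (x - bᵢ)` when the first `k` of the sorted `bᵢ` are `≤ x`
and the rest are `≥ x`. -/
lemma sign_lemma (x : ℝ) : ∀ (B : List ℝ) (k : ℕ), k ≤ B.length →
    (∀ i < k, B.getD i 0 ≤ x) → (∀ i, k ≤ i → i < B.length → x ≤ B.getD i 0) →
    0 ≤ (-1 : ℝ) ^ (B.length - k) * (B.map (fun b => x - b)).prod := by
  intro B
  induction B with
  | nil =>
    intro k hk _ _
    have hk0 : k = 0 := by simpa using hk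
    subst hk0
    simp
  | cons b T ih =>
    intro k hk h1 h2
    cases k with
    | zero =>
      have hbx : x ≤ b := by
        have := h2 0 (Nat.zero_le _) (by simp)
        simpa using this
      have hrec := ih 0 (Nat.zero_le _) (by omega)
        (fun i _ hi => by simpa using h2 (i+1) (Nat.zero_le _) (by simpa using Nat.succ_lt_succ hi))
      simp only [List.length_cons, List.map_cons, List.prod_cons, Nat.sub_zero] at *
      have : (-1 : ℝ) ^ (T.length + 1) * ((x - b) * (T.map (fun c => x - c)).prod)
          = (b - x) * ((-1 : ℝ) ^ T.length * (T.map (fun c => x - c)).prod) := by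
        ring
      rw [this]
      exact mul_nonneg (by linarith) hrec
    | succ k' =>
      have hbx : b ≤ x := by simpa using h1 0 (Nat.succ_pos _)
      have hrec := ih k' (by simpa using hk)
        (fun i hi => by simpa using h1 (i+1) (by omega))
        (fun i hi1 hi2 => by simpa using h2 (i+1) (by omega) (by simpa using Nat.succ_lt_succ hi2))
      simp only [List.length_cons, List.map_cons, List.prod_cons, Nat.succ_sub_succ]
      have : (-1 : ℝ) ^ (T.length - k') * ((x - b) * (T.map (fun c => x - c)).prod)
          = (x - b) * ((-1 : ℝ) ^ (T.length - k') * (T.map (fun c => x - c)).prod) := by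
        ring
      rw [this]
      exact mul_nonneg (by linarith) hrec

/-- IVT for polynomials with a strict sign change. -/
lemma ivt_root (P : Polynomial ℝ) {u v : ℝ} (huv : u < v)
    (hs : eval u P * eval v P < 0) : ∃ r, u < r ∧ r < v ∧ eval r P = 0 := by
  have hc : ContinuousOn (fun x => eval x P) (Set.Icc u v) :=
    (Polynomial.continuous P).continuousOn
  rcases mul_neg_iff.mp hs with ⟨hu, hv⟩ | ⟨hu, hv⟩
  · have := intermediate_value_Ioo' (le_of_lt huv) hc
    have h0 : (0:ℝ) ∈ Set.Ioo (eval v P) (eval u P) := ⟨hv, hu⟩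
    obtain ⟨r, hr1, hr2⟩ := this h0
    exact ⟨r, hr1.1, hr1.2, hr2⟩
  · have := intermediate_value_Ioo (le_of_lt huv) hc
    have h0 : (0:ℝ) ∈ Set.Ioo (eval u P) (eval v P) := ⟨hu, hv⟩
    obtain ⟨r, hr1, hr2⟩ := this h0
    exact ⟨r, hr1.1, hr1.2, hr2⟩

/-- behaviour near `-∞`: sign `(-1)^(natDegree)` times leading coeff. -/
lemma exists_neg_far (P : Polynomial ℝ) (hdeg : 0 < P.natDegree) (hl : 0 < P.leadingCoeff)
    (c : ℝ) : ∃ u, u < c ∧ 0 < (-1 : ℝ) ^ P.natDegree * eval u P := by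
  set Q := C ((-1 : ℝ) ^ P.natDegree) * P.comp (C (-1) * X) with hQ
  have hcompdeg : (P.comp (C (-1) * X)).natDegree = P.natDegree := by
    rw [Polynomial.natDegree_comp]
    simp
  have hQl : Q.leadingCoeff = P.leadingCoeff := by
    rw [hQ, Polynomial.leadingCoeff_mul, Polynomial.leadingCoeff_C,
      Polynomial.leadingCoeff_comp (by simp)]
    rw [Polynomial.leadingCoeff_mul, Polynomial.leadingCoeff_C, Polynomial.leadingCoeff_X]
    rw [mul_one, mul_comm, mul_assoc, ← mul_pow]
    norm_num
  have hQne : Q ≠ 0 := fun h => by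
    rw [h] at hQl; rw [Polynomial.leadingCoeff_zero] at hQl; exact absurd hQl.symm (ne_of_gt hl)
  have hQnd : Q.natDegree = P.natDegree := by
    rw [hQ, Polynomial.natDegree_C_mul (by positivity), hcompdeg]
  have hQdeg : 0 < Q.degree := by
    rw [Polynomial.degree_eq_natDegree hQne, hQnd]
    exact_mod_cast hdeg
  have ht := Polynomial.tendsto_atTop_of_leadingCoeff_nonneg Q hQdeg (by rw [hQl]; exact hl.le)
  have := (ht.eventually_gt_atTop 0).and (Filter.eventually_gt_atTop (-c))
  obtain ⟨y, hy1, hy2⟩ := this.exists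
  refine ⟨-y, by linarith, ?_⟩
  have : eval y Q = (-1 : ℝ) ^ P.natDegree * eval (-y) P := by
    rw [hQ]; simp [Polynomial.eval_comp]
  rw [← this]; exact hy1

lemma exists_pos_far (P : Polynomial ℝ) (hdeg : 0 < P.natDegree) (hl : 0 < P.leadingCoeff)
    (c : ℝ) : ∃ v, c < v ∧ 0 < eval v P := by
  have hQdeg : 0 < P.degree := by
    rw [Polynomial.degree_eq_natDegree (fun h => by simp [h] at hdeg)]
    exact_mod_cast hdeg
  have ht := Polynomial.tendsto_atTop_of_leadingCoeff_nonneg P hQdeg hl.le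
  obtain ⟨y, hy1, hy2⟩ := ((ht.eventually_gt_atTop 0).and (Filter.eventually_gt_atTop c)).exists
  exact ⟨y, hy2, hy1⟩

lemma interM_of_interlaces {h F : Polynomial ℝ} (hi : Interlaces h F) (x : ℝ) :
    cntLe h.roots x ≤ cntLe F.roots x ∧ cntLe F.roots x ≤ cntLe h.roots x + 1 := by
  obtain ⟨hh, hF, hdeg, A, B, hAs, hBs, hAc, hBc, hI⟩ := hi
  have hlenA : A.length = h.natDegree := by
    rw [← hh.2, hAc, Multiset.coe_card]
  have hlenB : B.length = F.natDegree := by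
    rw [← hF.2, hBc, Multiset.coe_card]
  have hlen : B.length = A.length + 1 := by omega
  rw [hAc, hBc]
  exact (cnt_char hAs hBs hlen).mp hI x

lemma interlaces_of_interM {h F : Polynomial ℝ} (hh : AllRealRoots h) (hF : AllRealRoots F)
    (hdeg : h.natDegree + 1 = F.natDegree)
    (hM : ∀ x : ℝ, cntLe h.roots x ≤ cntLe F.roots x ∧ cntLe F.roots x ≤ cntLe h.roots x + 1) :
    Interlaces h F := by
  refine ⟨hh, hF, hdeg, h.roots.sort (· ≤ ·), F.roots.sort (· ≤ ·),
    Multiset.pairwise_sort _ _, Multiset.pairwise_sort _ _,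
    (Multiset.sort_eq _ _).symm, (Multiset.sort_eq _ _).symm, ?_⟩
  have hlenA : (h.roots.sort (· ≤ ·)).length = h.natDegree := by
    rw [Multiset.length_sort]; exact hh.2
  have hlenB : (F.roots.sort (· ≤ ·)).length = F.natDegree := by
    rw [Multiset.length_sort]; exact hF.2
  apply (cnt_char (Multiset.pairwise_sort _ _) (Multiset.pairwise_sort _ _) (by omega)).mpr
  intro x
  rw [Multiset.sort_eq, Multiset.sort_eq]
  exact hM x

/-- sign of an interlaced polynomial at the `j`-th root of `h`. -/
lemma root_sign {h F : Polynomial ℝ} (hi : Interlaces h F) (hlF : 0 < F.leadingCoeff)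
    {A : List ℝ} (hAs : A.Pairwise (· ≤ ·)) (hAc : h.roots = (A : Multiset ℝ))
    {j : ℕ} (hj : j < A.length) :
    0 ≤ (-1 : ℝ) ^ (A.length - j) * eval (A.getD j 0) F := by
  have hh := hi.1
  have hF := hi.2.1
  have hdeg := hi.2.2.1
  set B := F.roots.sort (· ≤ ·) with hBdef
  have hBs : B.Pairwise (· ≤ ·) := Multiset.pairwise_sort _ _
  have hBc : F.roots = (B : Multiset ℝ) := (Multiset.sort_eq _ _).symm
  have hlenA : A.length = h.natDegree := by rw [← hh.2, hAc, Multiset.coe_card]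
  have hlenB : B.length = F.natDegree := by
    rw [hBdef, Multiset.length_sort]; exact hF.2
  have hlen : B.length = A.length + 1 := by omega
  have hI := (cnt_char hAs hBs hlen).mpr (fun x => by
    rw [← hAc, ← hBc]; exact interM_of_interlaces hi x)
  -- now the sign computation
  set x := A.getD j 0 with hx
  have h1 : ∀ i < j + 1, B.getD i 0 ≤ x := by
    intro i hij
    rcases Nat.lt_or_ge i j with hij' | hij'
    · exact le_trans (hI i (by omega)).1 (getD_mono hAs (by omega) hj)
    · have : i = j := by omega
      subst this
      exact (hI i hj).1
  have h2 : ∀ i, j + 1 ≤ i → i < B.length → x ≤ B.getD i 0 := by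
    intro i hij hilen
    exact le_trans (hI j hj).2 (getD_mono hBs hij hilen)
  have := sign_lemma x B (j+1) (by omega) h1 h2
  rw [eval_eq_prod hF hBc x]
  have hexp : B.length - (j + 1) = A.length - j := by omega
  rw [hexp] at this
  calc (0:ℝ) ≤ F.leadingCoeff * ((-1 : ℝ) ^ (A.length - j) * (B.map (fun b => x - b)).prod) :=
        mul_nonneg hlF.le this
    _ = (-1 : ℝ) ^ (A.length - j) * (F.leadingCoeff * (B.map (fun b => x - b)).prod) := by ring

/-- chain of IVT roots between sign-alternating points. -/
lemma chain_lemma (P : Polynomial ℝ) :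
    ∀ (A : List ℝ) (u v : ℝ), A.Pairwise (· < ·) → (∀ a ∈ A, u < a) →
    (∀ j < A.length, 0 < (-1 : ℝ) ^ (A.length - j) * eval (A.getD j 0) P) →
    0 < (-1 : ℝ) ^ (A.length + 1) * eval u P →
    (∀ a ∈ A, a < v) → u < v → 0 < eval v P →
    ∃ B : List ℝ, B.length = A.length + 1 ∧ B.Pairwise (· < ·) ∧
      (∀ b ∈ B, eval b P = 0) ∧ (∀ b ∈ B, u < b) ∧
      (∀ j < A.length, B.getD j 0 ≤ A.getD j 0 ∧ A.getD j 0 ≤ B.getD (j + 1) 0) := by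
  intro A
  induction A with
  | nil =>
    intro u v _ _ _ hu _ huv hv
    norm_num at hu
    have hPu : eval u P < 0 := hu
    obtain ⟨r, hr1, hr2, hr3⟩ := ivt_root P huv (by nlinarith)
    exact ⟨[r], rfl, List.pairwise_singleton _ r, by simpa using hr3, by simpa using hr1,
      by intro j hj; simp at hj⟩
  | cons a T ih =>
    intro u v hsort hua hsigns hu hav huv hv
    rw [List.pairwise_cons] at hsort
    have hua' : u < a := hua a (List.mem_cons_self)
    have hsa : 0 < (-1 : ℝ) ^ (T.length + 1) * eval a P := by
      have := hsigns 0 (by simp)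
      simpa using this
    have hPprod : eval u P * eval a P < 0 := by
      have hu' : 0 < (-1 : ℝ) ^ (T.length + 2) * eval u P := by
        simpa [Nat.add_assoc] using hu
      have hmul := mul_pos hu' hsa
      have : (-1 : ℝ) ^ (T.length + 2) * ((-1 : ℝ) ^ (T.length + 1)) = -(((-1:ℝ)^(T.length+1))^2) := by
        ring
      nlinarith [sq_nonneg ((-1:ℝ)^(T.length+1)), pow_ne_zero (T.length+1) (by norm_num : (-1:ℝ) ≠ 0)]
    obtain ⟨r, hr1, hr2, hr3⟩ := ivt_root P hua' hPprod
    obtain ⟨B', hB'len, hB'sort, hB'root, hB'gt, hB'I⟩ := ih a v hsort.2 hsort.1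
      (fun j hj => by
        have := hsigns (j + 1) (by simpa using Nat.succ_lt_succ hj)
        simpa [Nat.succ_sub_succ] using this)
      (by simpa using hsa)
      (fun t ht => hav t (List.mem_cons_of_mem _ ht)) (hav a (List.mem_cons_self)) hv
    refine ⟨r :: B', by simpa using hB'len, ?_, ?_, ?_, ?_⟩
    · rw [List.pairwise_cons]
      exact ⟨fun b hb => lt_trans hr2 (hB'gt b hb), hB'sort⟩
    · intro b hb
      rcases List.mem_cons.mp hb with hb | hb
      · rw [hb]; exact hr3
      · exact hB'root b hb
    · intro b hb
      rcases List.mem_cons.mp hb with hb | hb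
      · rw [hb]; exact hr1
      · exact lt_trans hua' (hB'gt b hb)
    · intro j hj
      cases j with
      | zero =>
        constructor
        · simpa using hr2.le
        · simp only [List.getD_cons_zero, List.getD_cons_succ]
          have hB'ne : 0 < B'.length := by omega
          have : B'.getD 0 0 ∈ B' := by
            rw [List.getD_eq_getElem _ _ hB'ne]; exact List.getElem_mem _
          exact (hB'gt _ this).le
      | succ j' =>
        have hj' : j' < T.length := by simpa using hj
        have := hB'I j' hj'
        simpa using this

lemma comb_lemma {f g : Polynomial ℝ} {d : ℕ} (hfd : f.natDegree = d) (hgd : g.natDegree = d)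
    {α β : ℝ} (hpos : 0 < α * f.leadingCoeff + β * g.leadingCoeff) :
    (C α * f + C β * g).natDegree = d ∧
    (C α * f + C β * g).leadingCoeff = α * f.leadingCoeff + β * g.leadingCoeff ∧
    C α * f + C β * g ≠ 0 := by
  set P := C α * f + C β * g with hP
  have hcoeff : P.coeff d = α * f.leadingCoeff + β * g.leadingCoeff := by
    rw [hP, Polynomial.coeff_add, Polynomial.coeff_C_mul, Polynomial.coeff_C_mul]
    have h1 : f.coeff d = f.leadingCoeff := by rw [← hfd, Polynomial.coeff_natDegree]
    have h2 : g.coeff d = g.leadingCoeff := by rw [← hgd, Polynomial.coeff_natDegree]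
    rw [h1, h2]
  have hne : P.coeff d ≠ 0 := by rw [hcoeff]; exact ne_of_gt hpos
  have hle : P.natDegree ≤ d := by
    apply le_trans (Polynomial.natDegree_add_le _ _)
    apply max_le
    · exact le_trans (Polynomial.natDegree_C_mul_le _ _) (le_of_eq hfd)
    · exact le_trans (Polynomial.natDegree_C_mul_le _ _) (le_of_eq hgd)
  have hge : d ≤ P.natDegree := Polynomial.le_natDegree_of_ne_zero hne
  have hdeg : P.natDegree = d := le_antisymm hle hge
  refine ⟨hdeg, ?_, fun h0 => by rw [h0] at hne; simp at hne⟩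
  rw [Polynomial.leadingCoeff, hdeg, hcoeff]

theorem aux : ∀ n : ℕ, ∀ f g h : Polynomial ℝ,
    0 < f.leadingCoeff → 0 < g.leadingCoeff → f.natDegree = n + 1 → g.natDegree = n + 1 →
    h.natDegree = n → AllRealRoots h → Interlaces h f → Interlaces h g →
    ∀ α β : ℝ, 0 < α → 0 < β →
      AllRealRoots (C α * f + C β * g) ∧ Interlaces h (C α * f + C β * g) := by
  intro n
  induction n using Nat.strong_induction_on with
  | _ n IH =>
  intro f g h hf hg hfd hgd hhd hhr h₁ h₂ α β hα hβ
  set P := C α * f + C β * g with hPdef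
  obtain ⟨hPdeg, hPlead, hPne⟩ := comb_lemma hfd hgd (α := α) (β := β) (by positivity)
  rw [← hPdef] at hPdeg hPlead hPne
  have hPleadpos : 0 < P.leadingCoeff := by rw [hPlead]; positivity
  set A := h.roots.sort (· ≤ ·) with hAdef
  have hAs : A.Pairwise (· ≤ ·) := Multiset.pairwise_sort _ _
  have hAc : h.roots = (A : Multiset ℝ) := (Multiset.sort_eq _ _).symm
  have hlenA : A.length = n := by rw [hAdef, Multiset.length_sort, hhr.2, hhd]
  have hevalP : ∀ x, eval x P = α * eval x f + β * eval x g := by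
    intro x; rw [hPdef]; simp
  have hsP : ∀ j, (hj : j < A.length) →
      0 ≤ (-1:ℝ)^(A.length - j) * eval (A.getD j 0) P := by
    intro j hj
    have h1 := root_sign h₁ hf hAs hAc hj
    have h2 := root_sign h₂ hg hAs hAc hj
    rw [hevalP]
    have : (-1:ℝ)^(A.length - j) * (α * eval (A.getD j 0) f + β * eval (A.getD j 0) g)
        = α * ((-1:ℝ)^(A.length - j) * eval (A.getD j 0) f)
          + β * ((-1:ℝ)^(A.length - j) * eval (A.getD j 0) g) := by ring
    rw [this]
    exact add_nonneg (mul_nonneg hα.le h1) (mul_nonneg hβ.le h2)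
  by_cases hAcase : ∀ a ∈ h.roots, eval a P ≠ 0
  · -- generic case: strict signs, IVT chain
    have hsPs : ∀ j, (hj : j < A.length) →
        0 < (-1:ℝ)^(A.length - j) * eval (A.getD j 0) P := by
      intro j hj
      have hmemA : A.getD j 0 ∈ A := by
        rw [List.getD_eq_getElem _ _ hj]; exact List.getElem_mem _
      have hmem : A.getD j 0 ∈ h.roots := by rw [hAc]; exact_mod_cast hmemA
      exact lt_of_le_of_ne (hsP j hj)
        (Ne.symm (mul_ne_zero (pow_ne_zero _ (by norm_num)) (hAcase _ hmem)))
    have hAstrict : A.Pairwise (· < ·) := by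
      rw [List.pairwise_iff_get]
      intro i j hij
      rcases lt_or_eq_of_le (hAs.rel_get_of_le hij.le) with hlt | heq
      · exact hlt
      · exfalso
        have hi1 : (i : ℕ) + 1 < A.length := by
          have := j.2; have := hij; omega
        have heq2 : A.getD (i : ℕ) 0 = A.getD ((i : ℕ) + 1) 0 := by
          rw [List.getD_eq_getElem _ _ (by omega), List.getD_eq_getElem _ _ hi1]
          apply le_antisymm
          · exact hAs.rel_get_of_le (a := ⟨i, by omega⟩) (b := ⟨(i:ℕ)+1, hi1⟩)
              (by simp [Fin.le_def])
          · have h1 : A.get ⟨(i:ℕ)+1, hi1⟩ ≤ A.get j := hAs.rel_get_of_le (by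
              simp only [Fin.le_def]; exact Nat.succ_le_of_lt hij)
            have h2 : A.get j = A.get i := heq.symm
            simp only [List.get_eq_getElem] at *
            rw [h2] at h1; exact h1
        have s1 := hsPs (i : ℕ) (by omega)
        have s2 := hsPs ((i : ℕ) + 1) hi1
        rw [← heq2] at s2
        set e := A.length - ((i : ℕ) + 1) with he
        have hee : A.length - (i : ℕ) = e + 1 := by omega
        rw [hee, pow_succ] at s1
        have hsum : (-1:ℝ)^e * (-1) * eval (A.getD (i:ℕ) 0) P
            + (-1:ℝ)^e * eval (A.getD (i:ℕ) 0) P = 0 := by ring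
        linarith
    have hdegpos : 0 < P.natDegree := by omega
    obtain ⟨u, hu1, hu2⟩ := exists_neg_far P hdegpos hPleadpos (A.getD 0 0)
    have hu2' : 0 < (-1:ℝ)^(A.length + 1) * eval u P := by
      have : P.natDegree = A.length + 1 := by omega
      rwa [this] at hu2
    have hua : ∀ a ∈ A, u < a := by
      intro a ha
      obtain ⟨i, hi⟩ := List.mem_iff_get.mp ha
      have : A.getD 0 0 ≤ a := by
        rw [← hi, List.get_eq_getElem, ← List.getD_eq_getElem A 0 i.2]
        exact getD_mono hAs (Nat.zero_le _) i.2
      linarith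
    obtain ⟨v, hv1, hv2⟩ := exists_pos_far P hdegpos hPleadpos
      (max u (A.getD (A.length - 1) 0))
    have huv : u < v := lt_of_le_of_lt (le_max_left _ _) hv1
    have hav : ∀ a ∈ A, a < v := by
      intro a ha
      obtain ⟨i, hi⟩ := List.mem_iff_get.mp ha
      have h1 : a ≤ A.getD (A.length - 1) 0 := by
        rw [← hi, List.get_eq_getElem, ← List.getD_eq_getElem A 0 i.2]
        exact getD_mono hAs (by have := i.2; omega) (by have := i.2; omega)
      exact lt_of_le_of_lt (le_trans h1 (le_max_right _ _)) hv1
    obtain ⟨B, hBlen, hBsort, hBroot, hBgt, hBI⟩ :=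
      chain_lemma P A u v hAstrict hua hsPs hu2' hav huv hv2
    have hBnodup : B.Nodup := hBsort.imp ne_of_lt
    have hsub : (↑B : Multiset ℝ) ≤ P.roots := by
      rw [Multiset.le_iff_subset (Multiset.coe_nodup.mpr hBnodup)]
      intro b hb
      have hbB : b ∈ B := by exact_mod_cast hb
      rw [Polynomial.mem_roots']
      exact ⟨hPne, hBroot b hbB⟩
    have hrootsP : P.roots = (↑B : Multiset ℝ) := by
      symm
      apply Multiset.eq_of_le_of_card_le hsub
      calc Multiset.card P.roots ≤ P.natDegree := P.card_roots'
        _ = n + 1 := hPdeg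
        _ = Multiset.card (↑B : Multiset ℝ) := by rw [Multiset.coe_card, hBlen]; omega
    have hPar : AllRealRoots P := ⟨hPne, by rw [hrootsP, Multiset.coe_card, hBlen]; omega⟩
    refine ⟨hPar, hhr, hPar, by omega, A, B, hAs, hBsort.imp le_of_lt, hAc, hrootsP, ?_⟩
    intro i hi
    exact hBI i hi
  · -- common-root case: factor out (X - a) and use the induction hypothesis
    push_neg at hAcase
    obtain ⟨a, hamem, haP⟩ := hAcase
    have hnpos : 0 < n := by
      have : 0 < Multiset.card h.roots := Multiset.card_pos_iff_exists_mem.mpr ⟨a, hamem⟩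
      rw [hhr.2, hhd] at this
      exact this
    obtain ⟨m, rfl⟩ : ∃ m, n = m + 1 := ⟨n - 1, by omega⟩
    have hamemA : a ∈ A := by
      rw [hAc] at hamem; exact_mod_cast hamem
    set j := A.idxOf a with hjdef
    have hj : j < A.length := List.idxOf_lt_length_iff.mpr hamemA
    have hgetD : A.getD j 0 = a := by
      rw [List.getD_eq_getElem _ _ hj]; exact List.getElem_idxOf hj
    set s : ℝ := (-1:ℝ)^(A.length - j) with hsdef
    have hsne : s ≠ 0 := pow_ne_zero _ (by norm_num)
    have h1f : 0 ≤ s * eval a f := by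
      have := root_sign h₁ hf hAs hAc hj; rwa [hgetD] at this
    have h1g : 0 ≤ s * eval a g := by
      have := root_sign h₂ hg hAs hAc hj; rwa [hgetD] at this
    have haP' : α * eval a f + β * eval a g = 0 := by rw [← hevalP]; exact haP
    have e3 : α * (s * eval a f) + β * (s * eval a g) = 0 := by linear_combination s * haP'
    have hf0 : eval a f = 0 := by
      have e4 : s * eval a f = 0 := by nlinarith [mul_nonneg hα.le h1f, mul_nonneg hβ.le h1g]
      rcases mul_eq_zero.mp e4 with h' | h'
      · exact absurd h' hsne
      · exact h'
    have hg0 : eval a g = 0 := by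
      have e4 : s * eval a g = 0 := by nlinarith [mul_nonneg hα.le h1f, mul_nonneg hβ.le h1g]
      rcases mul_eq_zero.mp e4 with h' | h'
      · exact absurd h' hsne
      · exact h'
    have hh0 : eval a h = 0 := Polynomial.isRoot_of_mem_roots hamem
    have hXne : (X - C a : Polynomial ℝ) ≠ 0 := Polynomial.X_sub_C_ne_zero a
    have hfne : f ≠ 0 := fun h0 => by rw [h0] at hf; simp at hf
    have hgne : g ≠ 0 := fun h0 => by rw [h0] at hg; simp at hg
    have hhne : h ≠ 0 := hhr.1
    obtain ⟨f₁, hfeq⟩ := Polynomial.dvd_iff_isRoot.mpr hf0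
    obtain ⟨g₁, hgeq⟩ := Polynomial.dvd_iff_isRoot.mpr hg0
    obtain ⟨h₁', hheq⟩ := Polynomial.dvd_iff_isRoot.mpr hh0
    have hf₁ne : f₁ ≠ 0 := fun h0 => hfne (by rw [hfeq, h0, mul_zero])
    have hg₁ne : g₁ ≠ 0 := fun h0 => hgne (by rw [hgeq, h0, mul_zero])
    have hh₁ne : h₁' ≠ 0 := fun h0 => hhne (by rw [hheq, h0, mul_zero])
    have hfdeg1 : f₁.natDegree = m + 1 := by
      have := Polynomial.natDegree_mul hXne hf₁ne
      rw [← hfeq, hfd] at this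
      simp [Polynomial.natDegree_X_sub_C] at this
      omega
    have hgdeg1 : g₁.natDegree = m + 1 := by
      have := Polynomial.natDegree_mul hXne hg₁ne
      rw [← hgeq, hgd] at this
      simp [Polynomial.natDegree_X_sub_C] at this
      omega
    have hhdeg1 : h₁'.natDegree = m := by
      have := Polynomial.natDegree_mul hXne hh₁ne
      rw [← hheq, hhd] at this
      simp [Polynomial.natDegree_X_sub_C] at this
      omega
    have hflead1 : f₁.leadingCoeff = f.leadingCoeff := by
      rw [hfeq, Polynomial.leadingCoeff_mul, (Polynomial.monic_X_sub_C a).leadingCoeff, one_mul]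
    have hglead1 : g₁.leadingCoeff = g.leadingCoeff := by
      rw [hgeq, Polynomial.leadingCoeff_mul, (Polynomial.monic_X_sub_C a).leadingCoeff, one_mul]
    have hfroots : f.roots = a ::ₘ f₁.roots := by
      rw [hfeq, Polynomial.roots_mul (by rw [← hfeq]; exact hfne), Polynomial.roots_X_sub_C,
        Multiset.singleton_add]
    have hgroots : g.roots = a ::ₘ g₁.roots := by
      rw [hgeq, Polynomial.roots_mul (by rw [← hgeq]; exact hgne), Polynomial.roots_X_sub_C,
        Multiset.singleton_add]
    have hhroots : h.roots = a ::ₘ h₁'.roots := by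
      rw [hheq, Polynomial.roots_mul (by rw [← hheq]; exact hhne), Polynomial.roots_X_sub_C,
        Multiset.singleton_add]
    have hf₁ar : AllRealRoots f₁ := by
      refine ⟨hf₁ne, ?_⟩
      have := hfroots ▸ (h₁.2.1).2
      rw [Multiset.card_cons] at this
      rw [hfd] at this
      omega
    have hg₁ar : AllRealRoots g₁ := by
      refine ⟨hg₁ne, ?_⟩
      have := hgroots ▸ (h₂.2.1).2
      rw [Multiset.card_cons] at this
      rw [hgd] at this
      omega
    have hh₁ar : AllRealRoots h₁' := by
      refine ⟨hh₁ne, ?_⟩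
      have := hhroots ▸ hhr.2
      rw [Multiset.card_cons] at this
      rw [hhd] at this
      omega
    have hintf : Interlaces h₁' f₁ := by
      apply interlaces_of_interM hh₁ar hf₁ar (by omega)
      intro x
      have base := interM_of_interlaces h₁ x
      rw [hhroots, hfroots, cntLe_cons, cntLe_cons] at base
      by_cases hax : a ≤ x <;> simp [hax] at base <;> exact ⟨by omega, by omega⟩
    have hintg : Interlaces h₁' g₁ := by
      apply interlaces_of_interM hh₁ar hg₁ar (by omega)
      intro x
      have base := interM_of_interlaces h₂ x
      rw [hhroots, hgroots, cntLe_cons, cntLe_cons] at base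
      by_cases hax : a ≤ x <;> simp [hax] at base <;> exact ⟨by omega, by omega⟩
    obtain ⟨hP₁ar, hint₁⟩ := IH m (by omega) f₁ g₁ h₁' (hflead1 ▸ hf) (hglead1 ▸ hg)
      hfdeg1 hgdeg1 hhdeg1 hh₁ar hintf hintg α β hα hβ
    set P₁ := C α * f₁ + C β * g₁ with hP₁def
    have hPeq : P = (X - C a) * P₁ := by
      rw [hPdef, hfeq, hgeq, hP₁def]; ring
    have hP₁ne : P₁ ≠ 0 := hP₁ar.1
    have hProots : P.roots = a ::ₘ P₁.roots := by
      rw [hPeq, Polynomial.roots_mul (by rw [← hPeq]; exact hPne), Polynomial.roots_X_sub_C,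
        Multiset.singleton_add]
    have hP₁deg : P₁.natDegree = m + 1 := by
      have := Polynomial.natDegree_mul hXne hP₁ne
      rw [← hPeq, hPdeg] at this
      simp [Polynomial.natDegree_X_sub_C] at this
      omega
    have hPar : AllRealRoots P := by
      refine ⟨hPne, ?_⟩
      rw [hProots, Multiset.card_cons, hP₁ar.2, hP₁deg, hPdeg]
    refine ⟨hPar, ?_⟩
    apply interlaces_of_interM hhr hPar (by omega)
    intro x
    have base := interM_of_interlaces hint₁ x
    rw [hhroots, hProots, cntLe_cons, cntLe_cons]
    by_cases hax : a ≤ x <;> simp [hax] <;> exact ⟨by omega, by omega⟩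

/-- If `f` and `g` have positive leading coefficients, degree `n+1`, and some
degree-`n` polynomial `h` with all real roots interlaces both, then for all `α, β > 0` the
combination `αf + βg` has all real roots and is interlaced by `h`. -/
theorem stmt10 (n : ℕ) (f g h : Polynomial ℝ)
    (hf : 0 < f.leadingCoeff) (hg : 0 < g.leadingCoeff)
    (hfd : f.natDegree = n + 1) (hgd : g.natDegree = n + 1)
    (hhd : h.natDegree = n) (hhr : AllRealRoots h)
    (h₁ : Interlaces h f) (h₂ : Interlaces h g) :
    ∀ α β : ℝ, 0 < α → 0 < β →
      AllRealRoots (C α * f + C β * g) ∧ Interlaces h (C α * f + C β * g) := by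
  intro α β hα hβ
  exact aux n f g h hf hg hfd hgd hhd hhr h₁ h₂ α β hα hβ
end

section
/- For d = 2: up to a positive scalar, CL-polynomials of degree 2 with h*-polynomial t^2 + ct + 1 have roots -1/2 ± (√(c^2 - 4c - 12))/(2c + 4); these roots lie on the critical line if and only if 0 ≤ c ≤ 6, and the imaginary part of the roots depends monotonically on c. -/
open Complex

/-- For `d = 2`, the CL-polynomial with h*-polynomial `t² + ct + 1`
(`c ≥ 0`) is, up to a positive scalar, `f(z) = (2+c)z² + (2+c)z + 2`. Its roots are
`-1/2 ± √(c²-4c-12)/(2c+4)`, i.e. `-1/2 ± i·√(-(c²-4c-12))/(2c+4)` when `c ≤ 6`;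
they lie on the critical line if and only if `0 ≤ c ≤ 6`, and the imaginary part of the
roots depends monotonically (strictly antitonically) on `c`. -/
theorem stmt12 (c : ℝ) (hc : 0 ≤ c) :
    ((∀ z : ℂ, ((2 : ℂ) + c) * z ^ 2 + ((2 : ℂ) + c) * z + 2 = 0 → z.re = -(1/2)) ↔ c ≤ 6) ∧
    (c ≤ 6 → ∀ z : ℂ,
      (((2 : ℂ) + c) * z ^ 2 + ((2 : ℂ) + c) * z + 2 = 0 ↔
        z = -(1/2) + (Real.sqrt (-(c ^ 2 - 4 * c - 12)) / (2 * c + 4)) * Complex.I ∨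
        z = -(1/2) - (Real.sqrt (-(c ^ 2 - 4 * c - 12)) / (2 * c + 4)) * Complex.I)) ∧
    StrictAntiOn (fun t : ℝ => Real.sqrt (-(t ^ 2 - 4 * t - 12)) / (2 * t + 4))
      (Set.Icc (0 : ℝ) 6) := by
  have hc2 : (0:ℝ) < c + 2 := by linarith
  have hC : ((2 : ℂ) + c) ≠ 0 := by
    have h1 : ((c + 2 : ℝ) : ℂ) ≠ 0 := by
      exact_mod_cast hc2.ne'
    intro h; apply h1; rw [← h]; push_cast; ring
  -- the second statement first
  have part2 : c ≤ 6 → ∀ z : ℂ,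
      (((2 : ℂ) + c) * z ^ 2 + ((2 : ℂ) + c) * z + 2 = 0 ↔
        z = -(1/2) + (Real.sqrt (-(c ^ 2 - 4 * c - 12)) / (2 * c + 4)) * Complex.I ∨
        z = -(1/2) - (Real.sqrt (-(c ^ 2 - 4 * c - 12)) / (2 * c + 4)) * Complex.I) := by
    intro h6 z
    set sR : ℝ := Real.sqrt (-(c ^ 2 - 4 * c - 12)) / (2 * c + 4) with hsR
    have hX : (0:ℝ) ≤ -(c ^ 2 - 4 * c - 12) := by nlinarith
    have hs2 : sR ^ 2 = (6 - c) / (4 * (c + 2)) := by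
      rw [hsR, div_pow, Real.sq_sqrt hX, div_eq_div_iff (by positivity) (by positivity)]
      ring
    have hcast : ((Real.sqrt (-(c ^ 2 - 4 * c - 12)) : ℂ) / (2 * (c:ℂ) + 4)) = (sR : ℂ) := by
      rw [hsR]; push_cast; ring
    have hs2C : ((sR : ℂ)) ^ 2 = (((6 - c) / (4 * (c + 2)) : ℝ) : ℂ) := by
      exact_mod_cast congrArg (fun x : ℝ => (x : ℂ)) hs2
    have hne : ((c:ℂ) + 2) ≠ 0 := by
      exact_mod_cast (show ((c + 2 : ℝ) : ℂ) ≠ 0 from by exact_mod_cast hc2.ne')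
    have h2 : ((2 : ℂ) + c) * ((1/4 : ℂ) + (sR : ℂ) ^ 2) = 2 := by
      rw [hs2C]
      push_cast
      field_simp
      ring
    have key : ∀ w : ℂ, ((2 : ℂ) + c) * w ^ 2 + ((2 : ℂ) + c) * w + 2
        = ((2 : ℂ) + c) * (w - (-(1/2) + (sR : ℂ) * I)) * (w - (-(1/2) - (sR : ℂ) * I)) := by
      intro w
      linear_combination (-1 : ℂ) * h2 + ((2 : ℂ) + c) * (sR : ℂ) ^ 2 * Complex.I_sq
    rw [hcast]
    constructor
    · intro h
      rw [key z] at h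
      rcases mul_eq_zero.mp h with h' | h'
      · rcases mul_eq_zero.mp h' with h'' | h''
        · exact absurd h'' hC
        · left; exact sub_eq_zero.mp h''
      · right; exact sub_eq_zero.mp h'
    · rintro (rfl | rfl) <;> rw [key] <;> ring
  refine ⟨⟨fun hall => ?_, fun h6 z hz => ?_⟩, part2, ?_⟩
  · -- if all roots on the critical line, then c ≤ 6
    by_contra h6
    push_neg at h6
    have hX' : (0:ℝ) < c ^ 2 - 4 * c - 12 := by nlinarith
    set t : ℝ := Real.sqrt (c ^ 2 - 4 * c - 12) / (2 * c + 4) with ht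
    have htpos : 0 < t := by
      apply div_pos (Real.sqrt_pos.mpr hX') (by linarith)
    have ht2 : (4 * (c + 2)) * t ^ 2 = c - 6 := by
      rw [ht, div_pow, Real.sq_sqrt hX'.le]
      have h24 : (2 * c + 4) ≠ 0 := by nlinarith
      field_simp
      ring
    have hr : (c + 2) * (-(1/2) + t) ^ 2 + (c + 2) * (-(1/2) + t) + 2 = 0 := by
      linear_combination (1/4 : ℝ) * ht2
    have hzero : ((2 : ℂ) + c) * ((( -(1/2) + t : ℝ)) : ℂ) ^ 2
        + ((2 : ℂ) + c) * (((-(1/2) + t : ℝ)) : ℂ) + 2 = 0 := by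
      have h0 : (((c + 2) * (-(1/2) + t) ^ 2 + (c + 2) * (-(1/2) + t) + 2 : ℝ) : ℂ) = 0 := by
        rw [hr]; norm_num
      push_cast at h0 ⊢
      linear_combination h0
    have := hall _ hzero
    rw [Complex.ofReal_re] at this
    linarith
  · -- roots from part2 have real part -1/2
    have hre : ((Real.sqrt (-(c ^ 2 - 4 * c - 12)) : ℂ) / (2 * (c:ℂ) + 4)
        = (((Real.sqrt (-(c ^ 2 - 4 * c - 12)) / (2 * c + 4) : ℝ)) : ℂ)) := by
      push_cast; ring
    rcases (part2 h6 z).mp hz with rfl | rfl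
    · rw [hre, Complex.add_re, Complex.mul_re, Complex.ofReal_re, Complex.ofReal_im,
        Complex.I_re, Complex.I_im]
      norm_num
    · rw [hre, Complex.sub_re, Complex.mul_re, Complex.ofReal_re, Complex.ofReal_im,
        Complex.I_re, Complex.I_im]
      norm_num
  · -- strict antitonicity
    intro x hx y hy hxy
    have hx2 : (0:ℝ) < x + 2 := by linarith [hx.1]
    have hy2 : (0:ℝ) < y + 2 := by linarith [hy.1]
    have hsq : ∀ u : ℝ, u ∈ Set.Icc (0:ℝ) 6 →
        (Real.sqrt (-(u ^ 2 - 4 * u - 12)) / (2 * u + 4)) ^ 2 = (6 - u) / (4 * (u + 2)) := by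
      intro u hu
      have hu2 : (0:ℝ) < u + 2 := by linarith [hu.1]
      have hXu : (0:ℝ) ≤ -(u ^ 2 - 4 * u - 12) := by nlinarith [hu.1, hu.2]
      rw [div_pow, Real.sq_sqrt hXu, div_eq_div_iff (by nlinarith [hu.1]) (by nlinarith [hu.1])]
      ring
    have hfy : (0:ℝ) ≤ Real.sqrt (-(x ^ 2 - 4 * x - 12)) / (2 * x + 4) :=
      div_nonneg (Real.sqrt_nonneg _) (by linarith [hx.1])
    simp only
    apply lt_of_pow_lt_pow_left₀ 2 hfy
    rw [hsq x hx, hsq y hy, div_lt_div_iff₀ (by positivity) (by positivity)]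
    nlinarith
end

section
/- Multiplication by (2z+1) preserves nonnegativity of h*-coefficients: if f is a polynomial of degree d whose h*-polynomial (with respect to degree d) has nonnegative coefficients, then (2z+1)·f has h*-polynomial (with respect to degree d+1) with nonnegative coefficients. Specifically, the operation maps the basis term t^n/(1-t)^{d+1} to ((2(d-n)+1)t^{n+1} + (2n+1)t^n)/(1-t)^{d+2}. -/
/-!
Multiplying the `k`-th coefficient of a series by `2k + 1` is the operator `2 t d/dt + 1`.
Applied to `h / (1 - t)^(d+1)` it gives `(2t(1 - t) h' + ((2d + 1)t + 1) h) / (1 - t)^(d+2)`,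
whose numerator has `(m+1)`-st coefficient `(2m + 3) h_{m+1} + (2(d - m) + 1) h_m`. This is
nonnegative as soon as the `h_i` are and `h` has degree at most `d`, and the degree bound holds
because the `(d+1)`-st forward difference of a polynomial of degree `d` vanishes.
-/

open Polynomial

theorem fwdDiff_iter_comp_natCast {M G : Type*} [AddCommMonoidWithOne M] [AddCommGroup G]
    (F : M → G) (n : ℕ) :
    (fwdDiff 1)^[n] (F ∘ Nat.cast) = ((fwdDiff 1)^[n] F) ∘ Nat.cast := by
  induction n with
  | zero => rfl
  | succ n ih =>
    rw [Function.iterate_succ_apply', Function.iterate_succ_apply', ih]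
    ext k
    simp [fwdDiff]

namespace Polynomial

variable {R : Type*} [CommRing R]

theorem coeff_X_mul_derivative (h : R[X]) (n : ℕ) :
    (X * derivative h).coeff n = n * h.coeff n := by
  cases n <;> simp [coeff_derivative, mul_comm]

theorem X_mul_derivative_X_pow (n : ℕ) : X * derivative (X ^ n : R[X]) = C (n : R) * X ^ n := by
  ext i
  rw [coeff_X_mul_derivative, coeff_C_mul, coeff_X_pow]
  split_ifs with h <;> simp [h]

/-- The h*-polynomial (w.r.t. `d + 1`) of `(2z + 1) f` when `h` is that of `f` (w.r.t. `d`), by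
`PowerSeries.mk_two_mul_add_one_mul_one_sub_X_pow_eq`; `X * derivative` is the Euler operator. -/
noncomputable def twoZAddOneHStar (d : ℕ) (h : R[X]) : R[X] :=
  2 * (1 - X) * (X * derivative h) + ((2 * (d : R[X]) + 1) * X + 1) * h

theorem twoZAddOneHStar_X_pow (d n : ℕ) :
    twoZAddOneHStar d (X ^ n : R[X])
      = C (2 * ((d : R) - n) + 1) * X ^ (n + 1) + C (2 * (n : R) + 1) * X ^ n := by
  simp only [twoZAddOneHStar, X_mul_derivative_X_pow, map_add, map_mul, map_sub, map_one,
    map_ofNat, map_natCast]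
  ring

theorem coeff_twoZAddOneHStar_zero (d : ℕ) (h : R[X]) :
    (twoZAddOneHStar d h).coeff 0 = h.coeff 0 := by
  simp [twoZAddOneHStar]

theorem coeff_twoZAddOneHStar_succ (d : ℕ) (h : R[X]) (m : ℕ) :
    (twoZAddOneHStar d h).coeff (m + 1)
      = (2 * m + 3) * h.coeff (m + 1) + (2 * ((d : R) - m) + 1) * h.coeff m := by
  simp [twoZAddOneHStar, mul_sub, sub_mul, add_mul, mul_assoc, coeff_X_mul_derivative,
    coeff_derivative]
  ring

theorem coeff_twoZAddOneHStar_nonneg [PartialOrder R] [IsOrderedRing R] {d : ℕ} {h : R[X]}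
    (hdeg : h.natDegree ≤ d) (hpos : ∀ i, 0 ≤ h.coeff i) (i : ℕ) :
    0 ≤ (twoZAddOneHStar d h).coeff i := by
  rcases i with _ | m
  · rw [coeff_twoZAddOneHStar_zero]
    exact hpos 0
  rw [coeff_twoZAddOneHStar_succ]
  rcases le_or_gt m d with hmd | hdm
  · have hcoeff_succ : 0 ≤ 2 * (m : R) + 3 :=
      add_nonneg (mul_nonneg zero_le_two m.cast_nonneg) zero_le_three
    have hcoeff : 0 ≤ 2 * ((d : R) - m) + 1 :=
      add_nonneg (mul_nonneg zero_le_two (sub_nonneg.mpr (Nat.mono_cast hmd))) zero_le_one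
    exact add_nonneg (mul_nonneg hcoeff_succ (hpos _)) (mul_nonneg hcoeff (hpos _))
  · rw [coeff_eq_zero_of_natDegree_lt (by omega),
      coeff_eq_zero_of_natDegree_lt (hdeg.trans_lt hdm), mul_zero, mul_zero, add_zero]

end Polynomial

namespace PowerSeries

variable {R : Type*} [CommRing R]

theorem coeff_succ_mul_one_sub_X (F : R⟦X⟧) (n : ℕ) :
    coeff (n + 1) (F * (1 - X)) = coeff (n + 1) F - coeff n F := by
  rw [mul_sub, mul_one, map_sub, coeff_succ_mul_X]

theorem coeff_add_mk_mul_one_sub_X_pow (g : ℕ → R) (j m : ℕ) :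
    coeff (m + j) (mk g * (1 - X) ^ j) = ((fwdDiff 1)^[j] g) m := by
  induction j generalizing m with
  | zero => simp
  | succ j ih =>
    rw [pow_succ, ← mul_assoc, ← add_assoc, coeff_succ_mul_one_sub_X, add_right_comm, ih, ih,
      Function.iterate_succ_apply']
    rfl

theorem natDegree_le_of_mk_eval_mul_one_sub_X_pow_eq {f h : R[X]} {d : ℕ}
    (hf : f.natDegree ≤ d)
    (hh : mk (fun k : ℕ => f.eval (k : R)) * (1 - X) ^ (d + 1) = (h : R⟦X⟧)) :
    h.natDegree ≤ d := by
  refine natDegree_le_iff_coeff_eq_zero.mpr fun m hm => ?_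
  obtain ⟨m, rfl⟩ := Nat.exists_eq_add_of_lt hm
  rw [← Polynomial.coeff_coe, ← hh, show d + m + 1 = m + (d + 1) by ring,
    coeff_add_mk_mul_one_sub_X_pow]
  change ((fwdDiff 1)^[d + 1] (f.eval ∘ Nat.cast)) m = 0
  rw [fwdDiff_iter_comp_natCast, fwdDiff_iter_eq_zero_of_degree_lt (Nat.lt_succ_of_le hf)]
  rfl

theorem mk_add_sub_choose_mul_one_sub_X_pow {d n : ℕ} (hn : n ≤ d) :
    mk (fun k : ℕ => ((k + d - n).choose d : R)) * (1 - X) ^ (d + 1) = X ^ n := by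
  have hshift : mk (fun k : ℕ => ((k + d - n).choose d : R))
      = X ^ n * mk (fun k : ℕ => ((d + k).choose d : R)) := by
    ext k
    rw [coeff_X_pow_mul', coeff_mk]
    split_ifs with hk
    · rw [coeff_mk, show k + d - n = d + (k - n) by omega]
    · rw [Nat.choose_eq_zero_of_lt (by omega), Nat.cast_zero]
  rw [hshift, mul_assoc, mk_add_choose_mul_one_sub_pow_eq_one, mul_one]

theorem mk_two_mul_add_one_mul_eq (g : ℕ → R) :
    mk (fun k : ℕ => (2 * (k : R) + 1) * g k) = 2 * X * d⁄dX R (mk g) + mk g := by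
  ext (_ | n)
  · simp
  · rw [two_mul, add_mul, mul_comm X, map_add, map_add, coeff_succ_mul_X, coeff_derivative,
      coeff_mk, coeff_mk]
    push_cast
    ring

theorem mk_two_mul_add_one_mul_one_sub_X_pow_eq {g : ℕ → R} {d : ℕ} {h : R[X]}
    (hg : mk g * (1 - X) ^ (d + 1) = (h : R⟦X⟧)) :
    mk (fun k : ℕ => (2 * (k : R) + 1) * g k) * (1 - X) ^ (d + 2)
      = (twoZAddOneHStar d h : R⟦X⟧) := by
  have hderiv : d⁄dX R (h : R⟦X⟧)
      = d⁄dX R (mk g) * (1 - X) ^ (d + 1) - ((d : R⟦X⟧) + 1) * mk g * (1 - X) ^ d := by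
    rw [← hg, Derivation.leibniz, derivative_pow, map_sub, derivative_one, derivative_X]
    simp only [add_tsub_cancel_right, smul_eq_mul]
    push_cast
    ring
  rw [Polynomial.twoZAddOneHStar, ← coeToPowerSeries.ringHom_apply]
  simp only [map_add, map_mul, map_sub, map_one, map_ofNat, map_natCast,
    coeToPowerSeries.ringHom_apply, Polynomial.coe_X, ← derivative_coe]
  rw [hderiv, ← hg, mk_two_mul_add_one_mul_eq]
  ring

end PowerSeries

/-- Multiplication by `2z+1` preserves nonnegativity of h*-coefficients:
if `f` has degree `d` and h*-polynomial `h` (w.r.t. `d`) with nonnegative coefficients, then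
`(2z+1)·f` has h*-polynomial (w.r.t. `d+1`) with nonnegative coefficients. Specifically, the
basis term `tⁿ/(1-t)^{d+1}` is mapped to `((2(d-n)+1)t^{n+1} + (2n+1)tⁿ)/(1-t)^{d+2}`. -/
theorem stmt14 (d : ℕ) (f : Polynomial ℝ) (hdeg : f.natDegree = d)
    (h : Polynomial ℝ)
    (hser : PowerSeries.mk (fun k : ℕ => f.eval (k : ℝ)) * (1 - PowerSeries.X) ^ (d + 1)
      = (h : PowerSeries ℝ))
    (hpos : ∀ i, 0 ≤ h.coeff i)
    (H : Polynomial ℝ)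
    (hHser : PowerSeries.mk (fun k : ℕ => (2 * (k : ℝ) + 1) * f.eval (k : ℝ)) *
        (1 - PowerSeries.X) ^ (d + 2) = (H : PowerSeries ℝ)) :
    (∀ i, 0 ≤ H.coeff i) ∧
    (∀ n ≤ d,
      PowerSeries.mk (fun k : ℕ => (2 * (k : ℝ) + 1) * (Nat.choose (k + d - n) d : ℝ)) *
          (1 - PowerSeries.X) ^ (d + 2)
        = ((C ((2 * ((d : ℝ) - n) + 1)) * X ^ (n + 1) + C (2 * (n : ℝ) + 1) * X ^ n :
            Polynomial ℝ) : PowerSeries ℝ)) := by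
  refine ⟨fun i => ?_, fun n hn => ?_⟩
  · have hH : H = twoZAddOneHStar d h :=
      coe_inj.mp (hHser.symm.trans (PowerSeries.mk_two_mul_add_one_mul_one_sub_X_pow_eq hser))
    rw [hH]
    exact coeff_twoZAddOneHStar_nonneg
      (PowerSeries.natDegree_le_of_mk_eval_mul_one_sub_X_pow_eq hdeg.le hser) hpos i
  · have hbasis : PowerSeries.mk (fun k : ℕ => (Nat.choose (k + d - n) d : ℝ)) *
        (1 - PowerSeries.X) ^ (d + 1) = ((X ^ n : ℝ[X]) : PowerSeries ℝ) := by
      rw [coe_pow, coe_X]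
      exact PowerSeries.mk_add_sub_choose_mul_one_sub_X_pow hn
    exact (PowerSeries.mk_two_mul_add_one_mul_one_sub_X_pow_eq hbasis).trans
      (congrArg _ (twoZAddOneHStar_X_pow d n))
end

section
/- Let f(z) = ∑_{i≥0} h*_i binom(z+d-i, d) be a polynomial of degree d with h*(t) = ∑ h*_i t^i. Then multiplying f by z^2 + z + c transforms the Ehrhart series term t^i/(1-t)^{d+1} into (α t^i + β t^{i+1} + γ t^{i+2})/(1-t)^{d+3}, where α = i^2 + i + c, β = 2(di - i^2 + d + 1 - c), and γ = d^2 - 2di - i + i^2 + d + c. -/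
open Polynomial

-- Nat identities
private lemma n1 (m d : ℕ) :
    (d+1) * ((d+2) * Nat.choose (m+d+2) (d+2)) = (m+d+1) * ((m+d+2) * Nat.choose (m+d) d) := by
  have h1 : (m+d+2) * Nat.choose (m+d+1) (d+1) = Nat.choose (m+d+2) (d+2) * (d+2) := by
    simpa using Nat.add_one_mul_choose_eq (m+d+1) (d+1)
  have h2 : (m+d+1) * Nat.choose (m+d) d = Nat.choose (m+d+1) (d+1) * (d+1) := by
    simpa using Nat.add_one_mul_choose_eq (m+d) d
  calc (d+1) * ((d+2) * Nat.choose (m+d+2) (d+2))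
      = (d+1) * (Nat.choose (m+d+2) (d+2) * (d+2)) := by ring
    _ = (d+1) * ((m+d+2) * Nat.choose (m+d+1) (d+1)) := by rw [h1]
    _ = (m+d+2) * (Nat.choose (m+d+1) (d+1) * (d+1)) := by ring
    _ = (m+d+2) * ((m+d+1) * Nat.choose (m+d) d) := by rw [h2]
    _ = _ := by ring

private lemma n2 (m d : ℕ) :
    (d+1) * ((d+2) * Nat.choose (m+d+1) (d+2)) = m * ((m+d+1) * Nat.choose (m+d) d) := by
  have h1 : Nat.choose (m+d+1) (d+2) * (d+2) = Nat.choose (m+d+1) (d+1) * m := by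
    have := Nat.choose_succ_right_eq (m+d+1) (d+1)
    simpa [Nat.add_sub_cancel, show m+d+1 - (d+1) = m by omega] using this
  have h2 : (m+d+1) * Nat.choose (m+d) d = Nat.choose (m+d+1) (d+1) * (d+1) := by
    simpa using Nat.add_one_mul_choose_eq (m+d) d
  calc (d+1) * ((d+2) * Nat.choose (m+d+1) (d+2))
      = (d+1) * (Nat.choose (m+d+1) (d+2) * (d+2)) := by ring
    _ = (d+1) * (Nat.choose (m+d+1) (d+1) * m) := by rw [h1]
    _ = m * (Nat.choose (m+d+1) (d+1) * (d+1)) := by ring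
    _ = m * ((m+d+1) * Nat.choose (m+d) d) := by rw [h2]

private lemma n3 (n d : ℕ) :
    (d+1) * ((d+2) * Nat.choose (n+1+d) (d+2)) = (n+1) * (n * Nat.choose (n+1+d) d) := by
  have h1 : Nat.choose (n+1+d) (d+2) * (d+2) = Nat.choose (n+1+d) (d+1) * n := by
    have := Nat.choose_succ_right_eq (n+1+d) (d+1)
    simpa [show n+1+d - (d+1) = n by omega] using this
  have h2 : Nat.choose (n+1+d) (d+1) * (d+1) = Nat.choose (n+1+d) d * (n+1) := by
    have := Nat.choose_succ_right_eq (n+1+d) d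
    simpa [show n+1+d - d = n+1 by omega] using this
  calc (d+1) * ((d+2) * Nat.choose (n+1+d) (d+2))
      = (d+1) * (Nat.choose (n+1+d) (d+2) * (d+2)) := by ring
    _ = (d+1) * (Nat.choose (n+1+d) (d+1) * n) := by rw [h1]
    _ = n * (Nat.choose (n+1+d) (d+1) * (d+1)) := by ring
    _ = n * (Nat.choose (n+1+d) d * (n+1)) := by rw [h2]
    _ = _ := by ring

-- Real versions
private lemma r1 (m d : ℕ) :
    ((d:ℝ)+1) * ((d+2) * Nat.choose (m+d+2) (d+2))
      = ((m:ℝ)+d+1) * (((m:ℝ)+d+2) * Nat.choose (m+d) d) := by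
  exact_mod_cast congrArg (Nat.cast : ℕ → ℝ) (n1 m d)

private lemma r2 (m d : ℕ) :
    ((d:ℝ)+1) * ((d+2) * Nat.choose (m+d+1) (d+2))
      = (m:ℝ) * (((m:ℝ)+d+1) * Nat.choose (m+d) d) := by
  exact_mod_cast congrArg (Nat.cast : ℕ → ℝ) (n2 m d)

private lemma r3 (m d : ℕ) :
    ((d:ℝ)+1) * ((d+2) * Nat.choose (m+d) (d+2))
      = (m:ℝ) * (((m:ℝ)-1) * Nat.choose (m+d) d) := by
  cases m with
  | zero => simp [Nat.choose_eq_zero_of_lt (by omega : d < d+2)]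
  | succ n =>
    have := congrArg (Nat.cast : ℕ → ℝ) (n3 n d)
    push_cast at this ⊢
    linarith [this]

-- pointwise coefficient identity
private lemma coeffId (d i : ℕ) (hi : i ≤ d) (c : ℝ) (k : ℕ) :
    ((k:ℝ)^2 + k + c) * (Nat.choose (k + d - i) d : ℝ)
      = ((i:ℝ)^2 + i + c) * (Nat.choose (k + (d+2) - i) (d+2) : ℝ)
        + (2 * ((d:ℝ)*i - (i:ℝ)^2 + d + 1 - c)) * (Nat.choose (k + (d+2) - (i+1)) (d+2) : ℝ)
        + ((d:ℝ)^2 - 2*d*i - i + (i:ℝ)^2 + d + c) * (Nat.choose (k + (d+2) - (i+2)) (d+2) : ℝ) := by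
  rcases lt_or_ge k i with hk | hk
  · rw [Nat.choose_eq_zero_of_lt (by omega : k + d - i < d),
      Nat.choose_eq_zero_of_lt (by omega : k + (d+2) - i < d+2),
      Nat.choose_eq_zero_of_lt (by omega : k + (d+2) - (i+1) < d+2),
      Nat.choose_eq_zero_of_lt (by omega : k + (d+2) - (i+2) < d+2)]
    simp
  · obtain ⟨m, rfl⟩ : ∃ m, k = i + m := ⟨k - i, by omega⟩
    rw [show i + m + d - i = m + d by omega,
      show i + m + (d+2) - i = m+d+2 by omega,
      show i + m + (d+2) - (i+1) = m+d+1 by omega,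
      show i + m + (d+2) - (i+2) = m+d by omega]
    have hD : ((d:ℝ)+1) * ((d:ℝ)+2) ≠ 0 := by positivity
    apply mul_left_cancel₀ hD
    have h1 := r1 m d
    have h2 := r2 m d
    have h3 := r3 m d
    push_cast at h1 h2 h3 ⊢
    linear_combination (-((i:ℝ)^2 + i + c)) * h1
      + (-(2 * ((d:ℝ)*i - (i:ℝ)^2 + d + 1 - c))) * h2
      + (-((d:ℝ)^2 - 2*d*i - i + (i:ℝ)^2 + d + c)) * h3

private lemma key (D j : ℕ) (hj : j ≤ D) :
    PowerSeries.mk (fun k => (Nat.choose (k + D - j) D : ℝ)) * (1 - PowerSeries.X) ^ (D + 1)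
      = PowerSeries.X ^ j := by
  have hmk : PowerSeries.mk (fun k => (Nat.choose (k + D - j) D : ℝ))
      = PowerSeries.X ^ j * (PowerSeries.invOneSubPow ℝ (D+1)).val := by
    rw [PowerSeries.invOneSubPow_val_succ_eq_mk_add_choose]
    ext n
    rw [PowerSeries.coeff_X_pow_mul', PowerSeries.coeff_mk]
    split_ifs with h
    · rw [PowerSeries.coeff_mk]
      congr 2
      omega
    · rw [Nat.choose_eq_zero_of_lt (by omega)]
      simp
  rw [hmk, mul_assoc, ← PowerSeries.invOneSubPow_inv_eq_one_sub_pow, Units.val_inv, mul_one]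

/-- Multiplying by `z² + z + c` transforms the Ehrhart series basis term
`tⁱ/(1-t)^{d+1} = ∑ binom(k+d-i, d) tᵏ` into `(α tⁱ + β t^{i+1} + γ t^{i+2})/(1-t)^{d+3}`,
where `α = i² + i + c`, `β = 2(di - i² + d + 1 - c)`, `γ = d² - 2di - i + i² + d + c`. -/
theorem stmt15 (d : ℕ) (c : ℝ) (i : ℕ) (hi : i ≤ d) :
    PowerSeries.mk
        (fun k : ℕ => ((k : ℝ) ^ 2 + k + c) * (Nat.choose (k + d - i) d : ℝ)) *
        (1 - PowerSeries.X) ^ (d + 3)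
      = ((C ((i : ℝ) ^ 2 + i + c) * X ^ i +
          C (2 * ((d : ℝ) * i - (i : ℝ) ^ 2 + d + 1 - c)) * X ^ (i + 1) +
          C ((d : ℝ) ^ 2 - 2 * d * i - i + (i : ℝ) ^ 2 + d + c) * X ^ (i + 2) :
            Polynomial ℝ) : PowerSeries ℝ) := by
  have hsplit : PowerSeries.mk
      (fun k : ℕ => ((k : ℝ) ^ 2 + k + c) * (Nat.choose (k + d - i) d : ℝ))
      = PowerSeries.C ((i : ℝ) ^ 2 + i + c) *
          PowerSeries.mk (fun k => (Nat.choose (k + (d+2) - i) (d+2) : ℝ))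
        + PowerSeries.C (2 * ((d : ℝ) * i - (i : ℝ) ^ 2 + d + 1 - c)) *
          PowerSeries.mk (fun k => (Nat.choose (k + (d+2) - (i+1)) (d+2) : ℝ))
        + PowerSeries.C ((d : ℝ) ^ 2 - 2 * d * i - i + (i : ℝ) ^ 2 + d + c) *
          PowerSeries.mk (fun k => (Nat.choose (k + (d+2) - (i+2)) (d+2) : ℝ)) := by
    ext k
    rw [PowerSeries.coeff_mk, map_add, map_add, PowerSeries.coeff_C_mul,
      PowerSeries.coeff_C_mul, PowerSeries.coeff_C_mul, PowerSeries.coeff_mk,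
      PowerSeries.coeff_mk, PowerSeries.coeff_mk]
    exact coeffId d i hi c k
  have h3 : d + 3 = (d + 2) + 1 := rfl
  rw [hsplit, h3, add_mul, add_mul, mul_assoc, mul_assoc, mul_assoc,
    key (d+2) i (by omega), key (d+2) (i+1) (by omega), key (d+2) (i+2) (by omega)]
  simp only [Polynomial.coe_add, Polynomial.coe_mul, Polynomial.coe_pow, Polynomial.coe_X,
    Polynomial.coe_C]
end

section
/- Let f(z) = a·∏_{i=0}^{m}(z^2 + z + c_i) (even degree d = 2m+2, a > 0) or f(z) = a(2z+1)∏_{i=0}^{m}(z^2+z+c_i) (odd degree), with real c_i ≥ 1/4 ordered increasingly c_0 ≤ c_1 ≤ ... ≤ c_m. If c_i ≤ 2i+2 for all i when d is odd, and c_i ≤ 2i+1 for all i when d is even, then the h*-polynomial of f has nonnegative coefficients. -/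
/-!
If `g(k) = ∑_{j ≤ D} p_j * (k + D - j).choose D` with all `p_j ≥ 0`, then the h*-polynomial of `g`
in degree `D` is `∑ p_j t^j`, since `k ↦ (k + D - j).choose D` has generating series
`t^j / (1 - t)^(D+1)`. Multiplying one such basis function by `k² + k + c` gives an explicit
three-term combination of basis functions of degree `D + 2`, with coefficients
`i² + i + c`, `2(i+1)(D+1-i) - 2c` and `(D-i)(D+1-i) + c`; these are all nonnegative as soon as
`0 ≤ c ≤ D + 1`. Starting from `a` (degree 0) or `a(2k+1)` (degree 1) and multiplying in the
quadratic factors in increasing order, the factor `k² + k + cᵢ` is applied in degree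
`D = 2i` resp. `2i + 1`, so the hypothesis `cᵢ ≤ 2i + 1` resp. `cᵢ ≤ 2i + 2` is exactly `cᵢ ≤ D + 1`.
-/

open PowerSeries

section ChooseIdentities

variable {R : Type*} [CommRing R]

lemma Nat.cast_choose_succ_mul (n k : ℕ) :
    (n.choose (k + 1) : R) * (k + 1) = n.choose k * (n - k) := by
  rcases le_or_gt k n with hkn | hnk
  · have h := congrArg (Nat.cast : ℕ → R) (n.choose_succ_right_eq k)
    push_cast [Nat.cast_sub hkn] at h
    exact h
  · simp [Nat.choose_eq_zero_of_lt hnk, Nat.choose_eq_zero_of_lt (hnk.trans k.lt_succ_self)]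

lemma Nat.cast_add_one_mul_choose (n k : ℕ) :
    ((n : R) + 1) * n.choose k = (n + 1).choose (k + 1) * (k + 1) := by
  have h := congrArg (Nat.cast : ℕ → R) (n.add_one_mul_choose_eq k)
  push_cast at h
  exact h

lemma Nat.cast_choose_add_two_add_two (n k : ℕ) :
    ((n + 2).choose (k + 2) : R) * ((k + 1) * (k + 2)) = (n + 1) * (n + 2) * n.choose k := by
  have h₁ := Nat.cast_add_one_mul_choose (R := R) n k
  have h₂ := Nat.cast_add_one_mul_choose (R := R) (n + 1) (k + 1)
  push_cast at h₁ h₂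
  linear_combination (-(k : R) - 1) * h₂ - (n + 2) * h₁

lemma Nat.cast_choose_add_one_add_two (n k : ℕ) :
    ((n + 1).choose (k + 2) : R) * ((k + 1) * (k + 2)) = (n + 1) * (n - k) * n.choose k := by
  have h₁ := Nat.cast_choose_succ_mul (R := R) n k
  have h₂ := Nat.cast_add_one_mul_choose (R := R) n (k + 1)
  push_cast at h₁ h₂
  linear_combination (-(k : R) - 1) * h₂ + (n + 1) * h₁

lemma Nat.cast_choose_add_two (n k : ℕ) :
    (n.choose (k + 2) : R) * ((k + 1) * (k + 2)) = (n - k) * (n - k - 1) * n.choose k := by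
  have h₁ := Nat.cast_choose_succ_mul (R := R) n k
  have h₂ := Nat.cast_choose_succ_mul (R := R) n (k + 1)
  push_cast at h₁ h₂
  linear_combination ((k : R) + 1) * h₂ + (n - k - 1) * h₁

end ChooseIdentities

def binomialBasis (D j : ℕ) (k : ℕ) : ℝ := ((k + (D - j)).choose D : ℕ)

/-- Presented by generators: the cone of `g : ℕ → ℝ` such that `mk g * (1 - X) ^ (D + 1)` is a
polynomial of degree at most `D` with nonnegative coefficients (the h*-polynomial of `g` in degree `D`). -/
def nonnegHStarCone (D : ℕ) : PointedCone ℝ (ℕ → ℝ) :=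
  PointedCone.hull ℝ (binomialBasis D '' Set.Iic D)

lemma binomialBasis_mem_nonnegHStarCone {D j : ℕ} (hj : j ≤ D) :
    binomialBasis D j ∈ nonnegHStarCone D :=
  PointedCone.subset_hull ⟨j, hj, rfl⟩

lemma mk_binomialBasis_mul_one_sub_pow {D j : ℕ} (hj : j ≤ D) :
    mk (binomialBasis D j) * (1 - X) ^ (D + 1) = X ^ j := by
  have hshift : mk (binomialBasis D j) = X ^ j * mk fun n => ((D + n).choose D : ℝ) := by
    ext n
    rw [coeff_mk, coeff_X_pow_mul', binomialBasis]
    split_ifs with hjn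
    · rw [coeff_mk, show n + (D - j) = D + (n - j) by omega]
    · simp [Nat.choose_eq_zero_of_lt (by omega : n + (D - j) < D)]
  rw [hshift, mul_assoc, mk_add_choose_mul_one_sub_pow_eq_one, mul_one]

def PowerSeries.mkLinearMap (S : Type*) [CommSemiring S] : (ℕ → S) →ₗ[S] S⟦X⟧ where
  toFun := mk
  map_add' _ _ := by ext; simp
  map_smul' _ _ := by ext; simp

lemma coeff_nonneg_of_mem_nonnegHStarCone {D : ℕ} {g : ℕ → ℝ} (hg : g ∈ nonnegHStarCone D)
    (n : ℕ) : 0 ≤ coeff n (mk g * (1 - X) ^ (D + 1)) := by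
  let hStarCoeff : (ℕ → ℝ) →ₗ[ℝ] ℝ :=
    coeff n ∘ₗ LinearMap.mulRight ℝ ((1 - X) ^ (D + 1)) ∘ₗ mkLinearMap ℝ
  suffices nonnegHStarCone D ≤ (PointedCone.positive ℝ ℝ).comap hStarCoeff from this hg
  refine Submodule.span_le.mpr ?_
  rintro _ ⟨j, hj, rfl⟩
  change 0 ≤ coeff n (mk (binomialBasis D j) * (1 - X) ^ (D + 1))
  rw [mk_binomialBasis_mul_one_sub_pow hj, coeff_X_pow]
  split_ifs <;> norm_num

lemma quadratic_mul_binomialBasis {D i : ℕ} (hi : i ≤ D) (c : ℝ) (k : ℕ) :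
    ((k : ℝ) ^ 2 + k + c) * binomialBasis D i k =
      ((i : ℝ) ^ 2 + i + c) * binomialBasis (D + 2) i k
        + (2 * ((i : ℝ) + 1) * (D + 1 - i) - 2 * c) * binomialBasis (D + 2) (i + 1) k
        + (((D : ℝ) - i) * (D + 1 - i) + c) * binomialBasis (D + 2) (i + 2) k := by
  simp only [binomialBasis, show k + (D + 2 - i) = k + (D - i) + 2 by omega,
    show k + (D + 2 - (i + 1)) = k + (D - i) + 1 by omega,
    show k + (D + 2 - (i + 2)) = k + (D - i) by omega]
  set n := k + (D - i) with hn
  have hk : (k : ℝ) = n - D + i := by rw [hn]; push_cast [Nat.cast_sub hi]; ring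
  have h₂ := Nat.cast_choose_add_two_add_two (R := ℝ) n D
  have h₁ := Nat.cast_choose_add_one_add_two (R := ℝ) n D
  have h₀ := Nat.cast_choose_add_two (R := ℝ) n D
  apply mul_right_cancel₀ (by positivity : ((D : ℝ) + 1) * (D + 2) ≠ 0)
  rw [hk]
  linear_combination (-((i : ℝ) ^ 2 + i + c)) * h₂
    - (2 * ((i : ℝ) + 1) * (D + 1 - i) - 2 * c) * h₁
    - (((D : ℝ) - i) * (D + 1 - i) + c) * h₀

lemma quadratic_mul_mem_nonnegHStarCone {D : ℕ} {c : ℝ} (hc₀ : 0 ≤ c) (hc : c ≤ D + 1)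
    {g : ℕ → ℝ} (hg : g ∈ nonnegHStarCone D) :
    (fun k : ℕ => (k : ℝ) ^ 2 + k + c) * g ∈ nonnegHStarCone (D + 2) := by
  suffices nonnegHStarCone D ≤
      (nonnegHStarCone (D + 2)).comap (LinearMap.mulLeft ℝ fun k : ℕ => (k : ℝ) ^ 2 + k + c) from
    this hg
  refine Submodule.span_le.mpr ?_
  rintro _ ⟨i, hi : i ≤ D, rfl⟩
  have hiD : (i : ℝ) ≤ D := by exact_mod_cast hi
  have hexpand : (fun k : ℕ => (k : ℝ) ^ 2 + k + c) * binomialBasis D i =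
      ((i : ℝ) ^ 2 + i + c) • binomialBasis (D + 2) i
        + (2 * ((i : ℝ) + 1) * (D + 1 - i) - 2 * c) • binomialBasis (D + 2) (i + 1)
        + (((D : ℝ) - i) * (D + 1 - i) + c) • binomialBasis (D + 2) (i + 2) := by
    funext k
    simp only [Pi.mul_apply, Pi.add_apply, Pi.smul_apply, smul_eq_mul]
    exact quadratic_mul_binomialBasis hi c k
  change _ * _ ∈ nonnegHStarCone (D + 2)
  rw [hexpand]
  -- the middle coefficient is nonnegative because `(i + 1) * (D + 1 - i) ≥ D + 1 ≥ c`
  refine add_mem (add_mem ?_ ?_) ?_ <;>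
    refine PointedCone.smul_mem _ ?_ (binomialBasis_mem_nonnegHStarCone (by omega)) <;>
    nlinarith

lemma prod_quadratic_mul_mem_nonnegHStarCone {e : ℕ} {g : ℕ → ℝ} (hg : g ∈ nonnegHStarCone e)
    (c : ℕ → ℝ) (t : ℕ) (hc : ∀ i < t, 0 ≤ c i ∧ c i ≤ e + 2 * i + 1) :
    (∏ i ∈ Finset.range t, fun k : ℕ => (k : ℝ) ^ 2 + k + c i) * g ∈
      nonnegHStarCone (e + 2 * t) := by
  induction t with
  | zero => simpa using hg
  | succ t ih =>
    obtain ⟨hct₀, hct⟩ := hc t t.lt_succ_self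
    rw [Finset.prod_range_succ, mul_right_comm, mul_comm _ (fun k : ℕ => _),
      show e + 2 * (t + 1) = e + 2 * t + 2 by ring]
    refine quadratic_mul_mem_nonnegHStarCone hct₀ (by push_cast; linarith) ?_
    exact ih fun i hi => hc i (hi.trans t.lt_succ_self)

lemma const_mem_nonnegHStarCone_zero {a : ℝ} (ha : 0 ≤ a) :
    (fun _ => a) ∈ nonnegHStarCone 0 := by
  convert PointedCone.smul_mem _ ha (binomialBasis_mem_nonnegHStarCone le_rfl) using 1
  funext k
  simp [binomialBasis]

lemma odd_linear_mem_nonnegHStarCone_one {a : ℝ} (ha : 0 ≤ a) :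
    (fun k : ℕ => a * (2 * k + 1)) ∈ nonnegHStarCone 1 := by
  convert PointedCone.smul_mem _ ha (add_mem (binomialBasis_mem_nonnegHStarCone zero_le_one)
    (binomialBasis_mem_nonnegHStarCone le_rfl)) using 1
  funext k
  simp only [binomialBasis, Pi.smul_apply, Pi.add_apply, smul_eq_mul, Nat.choose_one_right]
  push_cast
  ring

theorem stmt16_general (a : ℝ) (ha : 0 < a) (m : ℕ) (c : ℕ → ℝ)
    (hc : ∀ i ≤ m, (1 : ℝ)/4 ≤ c i)
    (d : ℕ) (hd : (Even d ∧ d = 2 * m + 2) ∨ (¬ Even d ∧ d = 2 * m + 3))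
    (hbound : ∀ i ≤ m, c i ≤ if Even d then 2 * (i : ℝ) + 1 else 2 * (i : ℝ) + 2)
    (f : ℝ → ℝ)
    (hf : ∀ x : ℝ, f x = a * (if Even d then 1 else 2 * x + 1) *
      ∏ i ∈ Finset.range (m + 1), (x ^ 2 + x + c i))
    (h : Polynomial ℝ)
    (hser : PowerSeries.mk (fun k : ℕ => f (k : ℝ)) * (1 - PowerSeries.X) ^ (d + 1)
      = (h : PowerSeries ℝ)) :
    ∀ j, 0 ≤ h.coeff j := by
  obtain ⟨e, g, hg, hde, hfg, hce⟩ : ∃ e, ∃ g ∈ nonnegHStarCone e, d = e + 2 * (m + 1) ∧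
      (fun k : ℕ => f k) = (∏ i ∈ Finset.range (m + 1), fun k : ℕ => (k : ℝ) ^ 2 + k + c i) * g ∧
      ∀ i ≤ m, c i ≤ e + 2 * i + 1 := by
    rcases hd with ⟨hev, hdm⟩ | ⟨hodd, hdm⟩
    · refine ⟨0, _, const_mem_nonnegHStarCone_zero ha.le, by omega, ?_, ?_⟩
      · funext k
        simp [hf, hev, Finset.prod_apply, mul_comm]
      · intro i hi
        simpa [hev] using hbound i hi
    · refine ⟨1, _, odd_linear_mem_nonnegHStarCone_one ha.le, by omega, ?_, ?_⟩
      · funext k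
        simp [hf, hodd, Finset.prod_apply, mul_comm]
      · intro i hi
        have hb := hbound i hi
        rw [if_neg hodd] at hb
        push_cast
        linarith
  have hmem := prod_quadratic_mul_mem_nonnegHStarCone hg c (m + 1)
    fun i hi => ⟨by linarith [hc i (by omega)], hce i (by omega)⟩
  intro j
  rw [← Polynomial.coeff_coe, ← hser, hfg, hde]
  exact coeff_nonneg_of_mem_nonnegHStarCone hmem j

/-- Proposition 4.1: Let `f` be a CL-polynomial of degree `d`:
`f(z) = a·∏(z²+z+cᵢ)` (`d = 2m+2` even) or `f(z) = a(2z+1)·∏(z²+z+cᵢ)` (`d = 2m+3` odd),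
with `a > 0` and real `cᵢ ≥ 1/4` ordered increasingly. If `cᵢ ≤ 2i+2` (d odd) resp.
`cᵢ ≤ 2i+1` (d even) for all `i`, then the h*-polynomial of `f` has nonnegative
coefficients. -/
theorem stmt16 (a : ℝ) (ha : 0 < a) (m : ℕ) (c : ℕ → ℝ)
    (hc : ∀ i ≤ m, (1 : ℝ)/4 ≤ c i)
    (hmono : ∀ i j, i ≤ j → j ≤ m → c i ≤ c j)
    (d : ℕ) (hd : (Even d ∧ d = 2 * m + 2) ∨ (¬ Even d ∧ d = 2 * m + 3))
    (hbound : ∀ i ≤ m, c i ≤ if Even d then 2 * (i : ℝ) + 1 else 2 * (i : ℝ) + 2)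
    (f : ℝ → ℝ)
    (hf : ∀ x : ℝ, f x = a * (if Even d then 1 else 2 * x + 1) *
      ∏ i ∈ Finset.range (m + 1), (x ^ 2 + x + c i))
    (h : Polynomial ℝ)
    (hser : PowerSeries.mk (fun k : ℕ => f (k : ℝ)) * (1 - PowerSeries.X) ^ (d + 1)
      = (h : PowerSeries ℝ)) :
    ∀ j, 0 ≤ h.coeff j :=
  stmt16_general a ha m c hc d hd hbound f hf h hser
end

section
/- Let f(z) = ∏_{i=0}^{m}(z^2+z+c_i) be a monic even-degree-d CL-polynomial (d = 2m+2) whose h*-polynomial has nonnegative coefficients. Then the constant coefficient of f, namely ∏ c_i = v_{d/2}, is ≥ 0, and -d·v_{d/2} + ∑_{l=0}^{d/2 - 1} 2^{d/2 - l} v_l ≥ 0, where v_l is the l-th elementary symmetric polynomial in c_0,...,c_m (with v_0 = 1). -/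
/-! Reading off the first two coefficients of `(∑ f(k) tᵏ)(1 - t)^(d+1)` gives `h*₀ = f(0)` and
`h*₁ = f(1) - (d + 1) f(0)`. Here `f(0) = ∏ cᵢ = v_{m+1}`, and by Vieta
`f(1) = ∏ (2 + cᵢ) = ∑_{l ≤ m+1} 2^(m+1-l) v_l`, so both inequalities are `h*₀, h*₁ ≥ 0`. -/

open Finset

namespace PowerSeries

variable {R : Type*} [CommRing R]

theorem coeff_one_one_sub_X_pow (n : ℕ) : coeff 1 ((1 - X : R⟦X⟧) ^ n) = -n := by
  simp [coeff_one_pow]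

theorem constantCoeff_mk_mul_one_sub_X_pow (a : ℕ → R) (n : ℕ) :
    constantCoeff (mk a * (1 - X) ^ n) = a 0 := by
  simp

theorem coeff_one_mk_mul_one_sub_X_pow (a : ℕ → R) (n : ℕ) :
    coeff 1 (mk a * (1 - X) ^ n) = a 1 - n * a 0 := by
  rw [coeff_one_mul, coeff_one_one_sub_X_pow]
  simp [sub_eq_add_neg, mul_comm]

end PowerSeries

theorem Finset.prod_add_eq_sum_esymm {σ R : Type*} [CommSemiring R] (s : Finset σ) (r : σ → R)
    (x : R) :
    ∏ i ∈ s, (x + r i) =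
      ∑ j ∈ range (#s + 1), (∑ t ∈ s.powersetCard j, ∏ i ∈ t, r i) * x ^ (#s - j) := by
  have vieta := congrArg (Polynomial.eval x) (Multiset.prod_X_add_C_eq_sum_esymm (s.val.map r))
  simpa [Polynomial.eval_multiset_prod, Polynomial.eval_prod, Multiset.map_map,
    Function.comp_def, Finset.esymm_map_val, Polynomial.eval_finsetSum] using vieta

theorem stmt17_general (m : ℕ) (c : ℕ → ℝ)
    (d : ℕ) (hd : d = 2 * m + 2)
    (f : ℝ → ℝ)
    (hf : ∀ x : ℝ, f x = ∏ i ∈ Finset.range (m + 1), (x ^ 2 + x + c i))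
    (h : Polynomial ℝ)
    (hser : PowerSeries.mk (fun k : ℕ => f (k : ℝ)) * (1 - PowerSeries.X) ^ (d + 1)
      = (h : PowerSeries ℝ))
    (hpos : ∀ j, 0 ≤ h.coeff j)
    (v : ℕ → ℝ)
    (hv : ∀ l, v l = ∑ S ∈ (Finset.range (m + 1)).powersetCard l, ∏ i ∈ S, c i) :
    0 ≤ v (m + 1) ∧
      0 ≤ -(d : ℝ) * v (m + 1) + ∑ l ∈ Finset.range (m + 1), 2 ^ (m + 1 - l) * v l := by
  have h0 : h.coeff 0 = f 0 := by
    rw [← Polynomial.coeff_coe, ← hser, PowerSeries.coeff_zero_eq_constantCoeff_apply,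
      PowerSeries.constantCoeff_mk_mul_one_sub_X_pow, Nat.cast_zero]
  have h1 : h.coeff 1 = f 1 - (d + 1) * f 0 := by
    rw [← Polynomial.coeff_coe, ← hser, PowerSeries.coeff_one_mk_mul_one_sub_X_pow]
    push_cast
    ring
  have f0 : f 0 = v (m + 1) := by
    have top := powersetCard_self (range (m + 1))
    rw [card_range] at top
    simp [hf, hv, top]
  have f1 : f 1 = ∑ l ∈ range (m + 2), 2 ^ (m + 1 - l) * v l := by
    calc f 1 = ∏ i ∈ range (m + 1), (2 + c i) := by rw [hf]; norm_num
      _ = _ := by simp [prod_add_eq_sum_esymm, hv, mul_comm]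
  refine ⟨f0 ▸ h0 ▸ hpos 0, ?_⟩
  have h1_nonneg := hpos 1
  rw [h1, f0, f1, sum_range_succ, Nat.sub_self, pow_zero, one_mul] at h1_nonneg
  subst hd
  push_cast at h1_nonneg ⊢
  linarith

/-- Proposition 4.2, even case: Let `f(z) = ∏_{i=0}^{m}(z²+z+cᵢ)` be a monic
CL-polynomial of even degree `d = 2m+2` whose h*-polynomial has nonnegative coefficients,
and let `v_l` be the `l`-th elementary symmetric polynomial of the `cᵢ` (`v₀ = 1`). Then
`v_{d/2} = ∏ cᵢ ≥ 0` and `-d·v_{d/2} + ∑_{l=0}^{d/2-1} 2^{d/2-l} v_l ≥ 0`. -/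
theorem stmt17 (m : ℕ) (c : ℕ → ℝ) (hc : ∀ i ≤ m, (1 : ℝ)/4 ≤ c i)
    (d : ℕ) (hd : d = 2 * m + 2)
    (f : ℝ → ℝ)
    (hf : ∀ x : ℝ, f x = ∏ i ∈ Finset.range (m + 1), (x ^ 2 + x + c i))
    (h : Polynomial ℝ)
    (hser : PowerSeries.mk (fun k : ℕ => f (k : ℝ)) * (1 - PowerSeries.X) ^ (d + 1)
      = (h : PowerSeries ℝ))
    (hpos : ∀ j, 0 ≤ h.coeff j)
    (v : ℕ → ℝ)
    (hv : ∀ l, v l = ∑ S ∈ (Finset.range (m + 1)).powersetCard l, ∏ i ∈ S, c i) :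
    0 ≤ v (m + 1) ∧
      0 ≤ -(d : ℝ) * v (m + 1) + ∑ l ∈ Finset.range (m + 1), 2 ^ (m + 1 - l) * v l :=
  stmt17_general m c d hd f hf h hser hpos v hv
end

section
/- For any CL-polynomial f of degree d whose h*-polynomial has nonnegative coefficients, every root -1/2 + α√-1 of f satisfies |α| ≤ α̃_d, where α̃_d is the maximum β such that -1/2 + β√-1 is a root of p_0^d(z) = d!(binom(z+d,d) + binom(z,d)). -/
/-!
Expanding `f` in the basis `binom(z + d - k, d)` with the `h*`-coefficients (the Hilbert
polynomial of `h*(t)/(1-t)^(d+1)`), the value of the `k`-th basis polynomial at `z = -1/2 + βi`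
is `i^d/d! · ∏_{l<d} (β - (l + 1/2 - k) i)`, a product whose argument is
`-∑_{l<d} arctan((l + 1/2 - k)/β)`. For `0 ≤ k ≤ d` this sum is bounded in absolute value by
`S(β) = ∑_{l<d} arctan((l + 1/2)/β)` (`arctanSum β d`), which decreases in `β`. So when
`S(β) < π/2` all these products have positive real part, and a nonzero combination of them with
nonnegative coefficients cannot vanish. On the other hand
`p₀ᵈ(-1/2 + βi) = i^d · 2 Re ∏_{l<d} (β - (l + 1/2) i)`, which vanishes where `S(β) = π/2`; such
a `β` exists by the intermediate value theorem and is at most `α̃_d`. Roots of the real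
polynomial `f` come in conjugate pairs, so we may take `α ≥ 0`.
-/

open Complex Finset

/-- `p₀ᵈ(z) = d!(binom(z+d,d) + binom(z,d)) = ∏_{j=1}^d (z+j) + ∏_{j=0}^{d-1}(z-j)`. -/
noncomputable def p0 (d : ℕ) (z : ℂ) : ℂ :=
  (∏ j ∈ Finset.range d, (z + (j + 1 : ℕ))) + ∏ j ∈ Finset.range d, (z - (j : ℕ))

namespace PowerSeries

theorem coeff_mk_mul_one_sub_X_pow {R : Type*} [CommRing R] (g : R → R) {e n : ℕ} (hen : e ≤ n) :
    coeff n (mk (fun k : ℕ => g k) * (1 - X) ^ e) = (fwdDiff 1)^[e] g ((n - e : ℕ) : R) := by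
  induction e generalizing n with
  | zero => simp
  | succ e ih =>
    obtain ⟨n, rfl⟩ : ∃ n', n = n' + 1 := ⟨n - 1, by omega⟩
    have hsub : ((n + 1 - e : ℕ) : R) = ((n - e : ℕ) : R) + 1 := by
      rw [Nat.sub_add_comm (by omega)]; push_cast; rfl
    rw [pow_succ, ← mul_assoc, mul_one_sub, map_sub, coeff_succ_mul_X, ih (by omega), ih (by omega),
      Function.iterate_succ_apply', fwdDiff, hsub, Nat.add_sub_add_right]

end PowerSeries

namespace Polynomial

theorem natDegree_le_of_mk_eval_mul_one_sub_X_pow {R : Type*} [CommRing R] {F h : R[X]} {d : ℕ}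
    (hF : F.natDegree ≤ d)
    (hser : PowerSeries.mk (fun n : ℕ => F.eval (n : R)) * (1 - PowerSeries.X) ^ (d + 1)
      = (h : PowerSeries R)) :
    h.natDegree ≤ d := by
  refine natDegree_le_iff_coeff_eq_zero.mpr fun n hn => ?_
  have hn : d < n := mod_cast hn
  rw [← coeff_coe, ← hser, PowerSeries.coeff_mk_mul_one_sub_X_pow (F.eval ·) hn,
    fwdDiff_iter_eq_zero_of_degree_lt (by omega), Pi.zero_apply]

theorem eq_hilbertPoly_of_mk_eval_mul_one_sub_X_pow {K : Type*} [Field K] [CharZero K]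
    {F h : K[X]} {d : ℕ}
    (hser : PowerSeries.mk (fun n : ℕ => F.eval (n : K)) * (1 - PowerSeries.X) ^ d
      = (h : PowerSeries K)) :
    F = hilbertPoly h d := by
  have hmk : PowerSeries.mk (fun n : ℕ => F.eval (n : K))
      = h * (PowerSeries.invOneSubPow K d).val := by
    rw [← hser, mul_assoc, ← PowerSeries.invOneSubPow_inv_eq_one_sub_pow, Units.inv_val, mul_one]
  refine eq_hilbertPoly_of_forall_coeff_eq_eval 0 fun n _ => ?_
  rw [← hmk, PowerSeries.coeff_mk]

theorem ascPochhammer_eval_eq_prod_range {R : Type*} [CommSemiring R] (n : ℕ) (r : R) :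
    (ascPochhammer R n).eval r = ∏ j ∈ range n, (r + j) := by
  induction n with
  | zero => simp
  | succ n ih => simp [ascPochhammer_succ_right, ih, prod_range_succ]

theorem aeval_preHilbertPoly {K A : Type*} [Field K] [CommRing A] [Algebra K A] (d k : ℕ) (z : A) :
    aeval z (preHilbertPoly K d k) = (d.factorial : K)⁻¹ • ∏ l ∈ range d, (z - k + 1 + l) := by
  rw [preHilbertPoly, map_smul, aeval_comp, ← eval_map_algebraMap, ascPochhammer_map,
    ascPochhammer_eval_eq_prod_range]
  simp

end Polynomial

open Real in
theorem Real.arctan_le_self {x : ℝ} (hx : 0 ≤ x) : arctan x ≤ x := by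
  rcases hx.eq_or_lt with rfl | hx
  · simp
  · simpa [tan_arctan] using (lt_tan (arctan_pos.mpr hx) (arctan_lt_pi_div_two x)).le

noncomputable def arctanSum (β : ℝ) (n : ℕ) : ℝ :=
  ∑ l ∈ range n, Real.arctan ((l + 1 / 2) / β)

section arctanSum

variable {β γ : ℝ} {n d : ℕ}

theorem arctanSum_nonneg (hβ : 0 ≤ β) : 0 ≤ arctanSum β n :=
  sum_nonneg fun _ _ => Real.arctan_nonneg.mpr (by positivity)

theorem arctanSum_mono (hβ : 0 ≤ β) {m : ℕ} (hnm : n ≤ m) : arctanSum β n ≤ arctanSum β m :=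
  sum_le_sum_of_subset_of_nonneg (range_subset_range.mpr hnm)
    fun _ _ _ => Real.arctan_nonneg.mpr (by positivity)

theorem arctanSum_lt_arctanSum (hγ : 0 < γ) (hγβ : γ < β) (hn : 0 < n) :
    arctanSum β n < arctanSum γ n :=
  sum_lt_sum_of_nonempty (nonempty_range_iff.mpr hn.ne') fun _ _ =>
    Real.arctan_strictMono (div_lt_div_of_pos_left (by positivity) hγ hγβ)

theorem sum_arctan_sub_div_eq (β : ℝ) {j : ℕ} (hjd : j ≤ d) :
    ∑ l ∈ range d, Real.arctan ((l + 1 / 2 - j) / β) = arctanSum β (d - j) - arctanSum β j := by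
  have hlow : ∑ l ∈ range j, Real.arctan ((l + 1 / 2 - j) / β) = -arctanSum β j := by
    rw [arctanSum, ← sum_range_reflect, ← sum_neg_distrib]
    refine sum_congr rfl fun l hl => ?_
    rw [← Real.arctan_neg, show j - 1 - l = j - (l + 1) by omega,
      Nat.cast_sub (by simp at hl; omega)]
    push_cast
    ring_nf
  rw [← sum_range_add_sum_Ico _ hjd, hlow, sum_Ico_eq_sum_range, arctanSum, sub_eq_add_neg,
    add_comm]
  congr 2 with l
  push_cast
  ring_nf

theorem abs_sum_arctan_sub_div_le (hβ : 0 ≤ β) {j : ℕ} (hjd : j ≤ d) :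
    |∑ l ∈ range d, Real.arctan ((l + 1 / 2 - j) / β)| ≤ arctanSum β d := by
  rw [sum_arctan_sub_div_eq β hjd, abs_le]
  constructor <;> linarith [arctanSum_mono hβ hjd, arctanSum_mono hβ (Nat.sub_le d j),
    arctanSum_nonneg hβ (n := j), arctanSum_nonneg hβ (n := d - j)]

theorem pi_div_two_lt_arctanSum_half (hd : 2 ≤ d) : Real.pi / 2 < arctanSum (1 / 2) d := by
  have hpair : Real.arctan 1 + Real.arctan 3 ≤ arctanSum (1 / 2) d := by
    calc Real.arctan 1 + Real.arctan 3 = arctanSum (1 / 2) 2 := by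
          norm_num [arctanSum, sum_range_succ]
      _ ≤ arctanSum (1 / 2) d := arctanSum_mono (by norm_num) hd
  have h3 : Real.pi / 4 < Real.arctan 3 := by
    rw [← Real.arctan_one]
    exact Real.arctan_strictMono (by norm_num)
  linarith [Real.arctan_one]

theorem arctanSum_sq_le_one (hd : 0 < d) : arctanSum ((d : ℝ) ^ 2) d ≤ 1 := by
  have hd' : (0 : ℝ) < d := mod_cast hd
  calc arctanSum ((d : ℝ) ^ 2) d ≤ ∑ _l ∈ range d, 1 / (d : ℝ) := by
        refine sum_le_sum fun l hl => (Real.arctan_le_self (by positivity)).trans ?_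
        rw [div_le_div_iff₀ (by positivity) hd', sq]
        have : (l : ℝ) + 1 / 2 ≤ d := by
          have : l + 1 ≤ d := mem_range.mp hl
          have : (l : ℝ) + 1 ≤ d := mod_cast this
          linarith
        nlinarith
    _ = 1 := by rw [sum_const, card_range, nsmul_eq_mul]; field_simp

theorem exists_arctanSum_eq_pi_div_two (hd : 2 ≤ d) :
    ∃ γ, 0 < γ ∧ arctanSum γ d = Real.pi / 2 := by
  have hd' : (2 : ℝ) ≤ d := mod_cast hd
  have hle : (1 / 2 : ℝ) ≤ (d : ℝ) ^ 2 := by nlinarith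
  have hcont : ContinuousOn (fun γ => arctanSum γ d) (Set.Icc (1 / 2) ((d : ℝ) ^ 2)) := by
    refine continuousOn_finsetSum _ fun l _ => Real.continuous_arctan.comp_continuousOn
      (continuousOn_const.div continuousOn_id fun x hx => ?_)
    exact (lt_of_lt_of_le (by norm_num) hx.1).ne'
  obtain ⟨γ, hγ, hγeq⟩ := intermediate_value_Icc' hle hcont
    ⟨(arctanSum_sq_le_one (by omega)).trans (by linarith [Real.pi_gt_three]),
      (pi_div_two_lt_arctanSum_half hd).le⟩
  exact ⟨γ, lt_of_lt_of_le (by norm_num) hγ.1, hγeq⟩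

end arctanSum

namespace Complex

theorem ofReal_sub_ofReal_mul_I_eq_polar {β : ℝ} (hβ : 0 < β) (t : ℝ) :
    (β : ℂ) - t * I = (√(β ^ 2 + t ^ 2) : ℂ) * exp ((-Real.arctan (t / β) : ℝ) * I) := by
  have hr : 0 < √(β ^ 2 + t ^ 2) := Real.sqrt_pos.2 (by positivity)
  have hs : √(1 + (t / β) ^ 2) = √(β ^ 2 + t ^ 2) / β := by
    rw [show 1 + (t / β) ^ 2 = (β ^ 2 + t ^ 2) / β ^ 2 by field_simp,
      Real.sqrt_div (by positivity), Real.sqrt_sq hβ.le]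
  have hcos : Real.cos (-Real.arctan (t / β)) = β / √(β ^ 2 + t ^ 2) := by
    rw [Real.cos_neg, Real.cos_arctan, hs]
    field_simp
  have hsin : Real.sin (-Real.arctan (t / β)) = -t / √(β ^ 2 + t ^ 2) := by
    rw [Real.sin_neg, Real.sin_arctan, hs]
    field_simp
  rw [exp_mul_I, ← ofReal_cos, ← ofReal_sin, hcos, hsin, mul_add, ← mul_assoc, ← ofReal_mul,
    ← ofReal_mul, mul_div_cancel₀ _ hr.ne', mul_div_cancel₀ _ hr.ne']
  push_cast
  ring

theorem re_prod_ofReal_sub_ofReal_mul_I {ι : Type*} (s : Finset ι) {β : ℝ} (hβ : 0 < β)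
    (t : ι → ℝ) :
    (∏ l ∈ s, ((β : ℂ) - t l * I)).re
      = (∏ l ∈ s, √(β ^ 2 + t l ^ 2)) * Real.cos (∑ l ∈ s, Real.arctan (t l / β)) := by
  simp_rw [ofReal_sub_ofReal_mul_I_eq_polar hβ, prod_mul_distrib, ← exp_sum, ← sum_mul,
    ← ofReal_prod, ← ofReal_sum, re_ofReal_mul, exp_ofReal_mul_I_re, sum_neg_distrib, Real.cos_neg]

theorem re_prod_ofReal_sub_ofReal_mul_I_pos {ι : Type*} (s : Finset ι) {β : ℝ} (hβ : 0 < β)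
    (t : ι → ℝ) (hsum : |∑ l ∈ s, Real.arctan (t l / β)| < Real.pi / 2) :
    0 < (∏ l ∈ s, ((β : ℂ) - t l * I)).re := by
  rw [re_prod_ofReal_sub_ofReal_mul_I s hβ]
  exact mul_pos (prod_pos fun l _ => Real.sqrt_pos.2 (by positivity))
    (Real.cos_pos_of_mem_Ioo ⟨by linarith [(abs_lt.1 hsum).1], (abs_lt.1 hsum).2⟩)

end Complex

open ComplexConjugate in
theorem p0_eq_zero_of_arctanSum_eq {d : ℕ} {γ : ℝ} (hγ : 0 < γ)
    (hsum : arctanSum γ d = Real.pi / 2) : p0 d (-(1 / 2) + γ * I) = 0 := by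
  set W := ∏ l ∈ range d, ((γ : ℂ) - ((l + 1 / 2 : ℝ) : ℂ) * I)
  have prod_I_mul (w : ℕ → ℂ) : ∏ l ∈ range d, I * w l = I ^ d * ∏ l ∈ range d, w l := by
    rw [← pow_card_mul_prod, card_range]
  have hup : ∏ j ∈ range d, (-(1 / 2) + γ * I + (j + 1 : ℕ)) = I ^ d * W := by
    rw [← prod_I_mul]
    refine prod_congr rfl fun l _ => ?_
    push_cast
    linear_combination ((l : ℂ) + 1 / 2) * I_sq
  have hdown : ∏ j ∈ range d, (-(1 / 2) + γ * I - (j : ℕ)) = I ^ d * conj W := by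
    rw [map_prod, ← prod_I_mul]
    refine prod_congr rfl fun l _ => ?_
    simp only [map_sub, map_mul, conj_ofReal, conj_I]
    push_cast
    linear_combination (-(l : ℂ) - 1 / 2) * I_sq
  have hre : W.re = 0 := by
    rw [re_prod_ofReal_sub_ofReal_mul_I _ hγ (fun l : ℕ => (l : ℝ) + 1 / 2)]
    simp only [arctanSum] at hsum
    rw [hsum, Real.cos_pi_div_two, mul_zero]
  rw [p0, hup, hdown, ← mul_add, add_conj, hre, mul_zero, ofReal_zero, mul_zero]

open Polynomial in
theorem aeval_preHilbertPoly_neg_half_add_mul_I (d k : ℕ) (β : ℝ) :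
    aeval (-(1 / 2) + β * I : ℂ) (preHilbertPoly ℝ d k)
      = (d.factorial : ℝ)⁻¹ •
        (I ^ d * ∏ l ∈ range d, ((β : ℂ) - ((l + 1 / 2 - k : ℝ) : ℂ) * I)) := by
  rw [aeval_preHilbertPoly, show I ^ d = I ^ #(range d) by rw [card_range], pow_card_mul_prod]
  congr 1
  refine prod_congr rfl fun l _ => ?_
  push_cast
  linear_combination ((l : ℂ) + 1 / 2 - k) * I_sq

open Polynomial in
theorem aeval_ne_zero_of_hStar_nonneg {F h : ℝ[X]} {d : ℕ} (hF : F ≠ 0) (hdeg : F.natDegree ≤ d)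
    (hser : PowerSeries.mk (fun n : ℕ => F.eval (n : ℝ)) * (1 - PowerSeries.X) ^ (d + 1)
      = (h : PowerSeries ℝ))
    (hpos : ∀ j, 0 ≤ h.coeff j) {β : ℝ} (hβ : 0 < β) (hβd : arctanSum β d < Real.pi / 2) :
    aeval (-(1 / 2) + β * I : ℂ) F ≠ 0 := by
  have hF_eq := eq_hilbertPoly_of_mk_eval_mul_one_sub_X_pow hser
  have hh : h.natDegree ≤ d := natDegree_le_of_mk_eval_mul_one_sub_X_pow hdeg hser
  have hsupp : h.support.Nonempty := by
    refine support_nonempty.mpr fun h0 => hF ?_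
    rw [hF_eq, h0, hilbertPoly_zero_left]
  set W : ℕ → ℂ := fun k => ∏ l ∈ range d, ((β : ℂ) - ((l + 1 / 2 - k : ℝ) : ℂ) * I)
  have hval : aeval (-(1 / 2) + β * I : ℂ) F
      = I ^ d * ∑ k ∈ h.support, (h.coeff k / d.factorial : ℝ) • W k := by
    rw [hF_eq, hilbertPoly_succ, map_sum, mul_sum]
    refine sum_congr rfl fun k _ => ?_
    rw [map_smul, aeval_preHilbertPoly_neg_half_add_mul_I, smul_smul, mul_smul_comm]
    rfl
  have hre_pos : 0 < ∑ k ∈ h.support, (h.coeff k / d.factorial) * (W k).re := by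
    refine sum_pos (fun k hk => mul_pos ?_ ?_) hsupp
    · exact div_pos ((hpos k).lt_of_ne' (mem_support_iff.mp hk)) (by positivity)
    · exact re_prod_ofReal_sub_ofReal_mul_I_pos _ hβ (fun l : ℕ => (l : ℝ) + 1 / 2 - k)
        ((abs_sum_arctan_sub_div_le hβ.le
          ((le_natDegree_of_mem_supp k hk).trans hh)).trans_lt hβd)
  rw [hval, mul_ne_zero_iff]
  refine ⟨pow_ne_zero _ I_ne_zero, fun hsum => hre_pos.ne' ?_⟩
  simpa [re_sum] using congrArg re hsum

open Polynomial in
noncomputable def clPoly (a : ℝ) (d m : ℕ) (c : ℕ → ℝ) : ℝ[X] :=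
  C a * (if Even d then 1 else C 2 * X + 1) * ∏ i ∈ range (m + 1), (X ^ 2 + X + C (c i))

namespace clPoly

open Polynomial

variable {a : ℝ} {d m : ℕ} {c : ℕ → ℝ}

theorem eval_eq (x : ℝ) : (clPoly a d m c).eval x
    = a * (if Even d then 1 else 2 * x + 1) * ∏ i ∈ range (m + 1), (x ^ 2 + x + c i) := by
  split_ifs with hd <;> simp [clPoly, hd, eval_prod]

theorem aeval_eq (z : ℂ) : aeval z (clPoly a d m c)
    = a * (if Even d then 1 else 2 * z + 1) * ∏ i ∈ range (m + 1), (z ^ 2 + z + c i) := by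
  split_ifs with hd <;> simp [clPoly, hd, map_prod]

theorem ne_zero (ha : a ≠ 0) : clPoly a d m c ≠ 0 := by
  have hprod : (∏ i ∈ range (m + 1), (X ^ 2 + X + C (c i)) : ℝ[X]) ≠ 0 :=
    (monic_prod_of_monic _ _ fun i _ => by monicity!).ne_zero
  refine mul_ne_zero (mul_ne_zero (C_ne_zero.mpr ha) ?_) hprod
  split_ifs
  · exact one_ne_zero
  · exact fun h0 => by simpa using congrArg (eval 0) h0

theorem natDegree_le (hd : (Even d ∧ d = 2 * m + 2) ∨ (¬ Even d ∧ d = 2 * m + 3)) :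
    (clPoly a d m c).natDegree ≤ d := by
  have hprod : (∏ i ∈ range (m + 1), (X ^ 2 + X + C (c i)) : ℝ[X]).natDegree ≤ 2 * (m + 1) := by
    refine (natDegree_prod_le _ _).trans ?_
    refine (sum_le_card_nsmul _ _ 2 fun i _ => ?_).trans (by simp [mul_comm])
    compute_degree
  have hlin : (if Even d then 1 else C 2 * X + 1 : ℝ[X]).natDegree ≤ if Even d then 0 else 1 := by
    split_ifs
    · simp
    · compute_degree
  have hfactors := add_le_add (natDegree_mul_le.trans (add_le_add (natDegree_C a).le hlin)) hprod
  refine (natDegree_mul_le.trans hfactors).trans ?_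
  rcases hd with ⟨hE, rfl⟩ | ⟨hE, rfl⟩ <;> simp only [hE, if_true, if_false] <;> omega

end clPoly

open ComplexConjugate Polynomial in
theorem aeval_neg_half_add_abs_mul_I_eq_zero {p : ℝ[X]} {α : ℝ}
    (h : aeval (-(1 / 2) + α * I : ℂ) p = 0) : aeval (-(1 / 2) + |α| * I : ℂ) p = 0 := by
  rcases abs_choice α with hα | hα
  · rwa [hα]
  · have hconj : -(1 / 2) + ((-α : ℝ) : ℂ) * I = conj (-(1 / 2) + α * I) := by
      apply Complex.ext <;> simp
    rw [hα, hconj, aeval_conj, h, map_zero]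

theorem stmt18_general (a : ℝ) (ha : a ≠ 0) (m : ℕ) (c : ℕ → ℝ)
    (d : ℕ) (hd : (Even d ∧ d = 2 * m + 2) ∨ (¬ Even d ∧ d = 2 * m + 3))
    (f : ℂ → ℂ)
    (hf : ∀ z : ℂ, f z = (a : ℂ) * (if Even d then 1 else 2 * z + 1) *
      ∏ i ∈ Finset.range (m + 1), (z ^ 2 + z + (c i : ℂ)))
    (h : Polynomial ℝ)
    (hser : PowerSeries.mk (fun k : ℕ =>
        a * (if Even d then 1 else 2 * (k : ℝ) + 1) *
          ∏ i ∈ Finset.range (m + 1), ((k : ℝ) ^ 2 + k + c i)) *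
        (1 - PowerSeries.X) ^ (d + 1) = (h : PowerSeries ℝ))
    (hpos : ∀ j, 0 ≤ h.coeff j)
    (αtd : ℝ) (hαtd : IsGreatest {β : ℝ | p0 d (-(1/2) + β * Complex.I) = 0} αtd) :
    ∀ α : ℝ, f (-(1/2) + α * Complex.I) = 0 → |α| ≤ αtd := by
  have hd2 : 2 ≤ d := by rcases hd with ⟨_, rfl⟩ | ⟨_, rfl⟩ <;> omega
  obtain ⟨γ, hγ, hγd⟩ := exists_arctanSum_eq_pi_div_two hd2
  have hγα : γ ≤ αtd := hαtd.2 (p0_eq_zero_of_arctanSum_eq hγ hγd)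
  intro α hα
  by_contra! hlt
  have hroot : Polynomial.aeval (-(1 / 2) + |α| * I : ℂ) (clPoly a d m c) = 0 :=
    aeval_neg_half_add_abs_mul_I_eq_zero (by rwa [clPoly.aeval_eq, ← hf])
  refine aeval_ne_zero_of_hStar_nonneg (clPoly.ne_zero ha) (clPoly.natDegree_le hd) ?_ hpos
    (hγ.trans (hγα.trans_lt hlt)) ?_ hroot
  · simpa only [clPoly.eval_eq] using hser
  · exact hγd ▸ arctanSum_lt_arctanSum hγ (hγα.trans_lt hlt) (by omega)

/-- Theorem 3.5: For any CL-polynomial `f` of degree `d` whose h*-polynomial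
has nonnegative coefficients, every root `-1/2 + α√-1` of `f` satisfies `|α| ≤ αtd_d`, the
maximum `β` with `p₀ᵈ(-1/2 + β√-1) = 0`. -/
theorem stmt18 (a : ℝ) (ha : a ≠ 0) (m : ℕ) (c : ℕ → ℝ) (hc : ∀ i ≤ m, (1 : ℝ)/4 ≤ c i)
    (d : ℕ) (hd : (Even d ∧ d = 2 * m + 2) ∨ (¬ Even d ∧ d = 2 * m + 3))
    (f : ℂ → ℂ)
    (hf : ∀ z : ℂ, f z = (a : ℂ) * (if Even d then 1 else 2 * z + 1) *
      ∏ i ∈ Finset.range (m + 1), (z ^ 2 + z + (c i : ℂ)))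
    (h : Polynomial ℝ)
    (hser : PowerSeries.mk (fun k : ℕ =>
        a * (if Even d then 1 else 2 * (k : ℝ) + 1) *
          ∏ i ∈ Finset.range (m + 1), ((k : ℝ) ^ 2 + k + c i)) *
        (1 - PowerSeries.X) ^ (d + 1) = (h : PowerSeries ℝ))
    (hpos : ∀ j, 0 ≤ h.coeff j)
    (αtd : ℝ) (hαtd : IsGreatest {β : ℝ | p0 d (-(1/2) + β * Complex.I) = 0} αtd) :
    ∀ α : ℝ, f (-(1/2) + α * Complex.I) = 0 → |α| ≤ αtd :=
  stmt18_general a ha m c d hd f hf h hser hpos αtd hαtd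
end
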